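/- arXiv:2211.01865 — 14 statements merged into one kernel-verified Lean document; each statement's English description precedes it below -/
import Mathlib

section
/- (Abstract magnetic Pestov identity, Theorem 2.2.) For every u ∈ E one has the identity ‖FVu‖² − ⟪K̂(Vu), Vu⟫ + ‖Fu‖² = ‖VFu‖², as an equality of complex numbers (the squared norms being coerced to ℂ; in particular ⟪K̂(Vu), Vu⟫ is real). -/
/-- Abstract magnetic Pestov identity (Theorem 2.2).
`E` is a complex inner product space; the paper's pairing `⟪x, y⟫`, linear in the
first argument and conjugate-linear in the second, is `inner y x` in Mathlib's
convention.  `F`, `P`, `V`, `κ`, `K` abstract the magnetic generator, the horizontal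
vector field `X⊥`, the vertical vector field, and multiplication by the magnetic
intensity and magnetic curvature. -/
theorem magnetic_pestov_identity
    {E : Type*} [NormedAddCommGroup E] [InnerProductSpace ℂ E]
    (F P V κ K : E →ₗ[ℂ] E)
    (hFskew : ∀ u w : E, (inner ℂ w (F u) : ℂ) = -(inner ℂ (F w) u : ℂ))
    (hPskew : ∀ u w : E, (inner ℂ w (P u) : ℂ) = -(inner ℂ (P w) u : ℂ))
    (hVskew : ∀ u w : E, (inner ℂ w (V u) : ℂ) = -(inner ℂ (V w) u : ℂ))
    (hVF : ∀ u : E, V (F u) - F (V u) = P u)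
    (hVP : ∀ u : E, V (P u) - P (V u) = -F u + κ (V u))
    (hFP : ∀ u : E, F (P u) - P (F u) = -κ (F u) + K (V u))
    (hVκ : ∀ u : E, V (κ u) = κ (V u)) :
    ∀ u : E,
      (‖F (V u)‖ : ℂ) ^ 2 - (inner ℂ (V u) (K (V u)) : ℂ) + (‖F u‖ : ℂ) ^ 2
        = (‖V (F u)‖ : ℂ) ^ 2 := by

  intro u
  have e1 : V (F u) = P u + F (V u) := sub_eq_iff_eq_add.mp (hVF u)
  have e2 : K (V u) = F (P u) - P (F u) + κ (F u) := by
    rw [hFP u]; abel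
  have e3 : κ (V (F u)) = V (P (F u)) - P (V (F u)) + F (F u) := by
    rw [hVP (F u)]; abel
  have nA : (inner ℂ (V (F u)) (V (F u)) : ℂ) = (‖V (F u)‖ : ℂ) ^ 2 :=
    inner_self_eq_norm_sq_to_K _
  have nB : (inner ℂ (F (V u)) (F (V u)) : ℂ) = (‖F (V u)‖ : ℂ) ^ 2 :=
    inner_self_eq_norm_sq_to_K _
  have nF : (inner ℂ (F u) (F u) : ℂ) = (‖F u‖ : ℂ) ^ 2 :=
    inner_self_eq_norm_sq_to_K _
  -- Key 2 : ‖VFu‖² = ‖FVu‖² + ⟪Pu, VFu⟫ + ⟪FVu, Pu⟫ (Mathlib convention)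
  have key2 : (‖V (F u)‖ : ℂ) ^ 2
      = (‖F (V u)‖ : ℂ) ^ 2 + (inner ℂ (F (V u)) (P u) : ℂ)
        + (inner ℂ (P u) (V (F u)) : ℂ) := by
    rw [← nA, ← nB]
    conv_lhs => rw [e1]
    rw [inner_add_left, e1]; simp only [inner_add_right]
    ring
  -- Key 1 : ⟪Vu, K Vu⟫ = ‖Fu‖² - ⟪FVu, Pu⟫ - ⟪Pu, VFu⟫
  have s3 : (inner ℂ (V u) (F (P u)) : ℂ) = -(inner ℂ (F (V u)) (P u) : ℂ) :=
    hFskew (P u) (V u)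
  have s4 : (inner ℂ (V u) (P (F u)) : ℂ) = -(inner ℂ (P (V u)) (F u) : ℂ) :=
    hPskew (F u) (V u)
  have s5 : (inner ℂ (V u) (κ (F u)) : ℂ) = -(inner ℂ u (κ (V (F u))) : ℂ) := by
    have h := hVskew (κ (F u)) u
    rw [hVκ (F u)] at h
    linear_combination h
  have s6 : (inner ℂ u (κ (V (F u))) : ℂ)
      = (inner ℂ u (V (P (F u))) : ℂ) - (inner ℂ u (P (V (F u))) : ℂ)
        + (inner ℂ u (F (F u)) : ℂ) := by
    rw [e3, inner_add_right, inner_sub_right]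
  have s7 : (inner ℂ u (V (P (F u))) : ℂ) = -(inner ℂ (V u) (P (F u)) : ℂ) :=
    hVskew (P (F u)) u
  have s8 : (inner ℂ u (P (V (F u))) : ℂ) = -(inner ℂ (P u) (V (F u)) : ℂ) :=
    hPskew (V (F u)) u
  have s9 : (inner ℂ u (F (F u)) : ℂ) = -(inner ℂ (F u) (F u) : ℂ) :=
    hFskew (F u) u
  have key1 : (inner ℂ (V u) (K (V u)) : ℂ)
      = (‖F u‖ : ℂ) ^ 2 - (inner ℂ (F (V u)) (P u) : ℂ)
        - (inner ℂ (P u) (V (F u)) : ℂ) := by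
    rw [e2, inner_add_right, inner_sub_right, s3, s4, s5, s6, s7, s8, s9, s4, nF]
    ring
  rw [key1, key2]
  ring
end

section
/- (Corollary 2.3.) For every u ∈ E one has 2 Re ⟪Pu, VFu⟫ = ‖Fu‖² + ‖Pu‖² − ⟪K̂(Vu), Vu⟫, as an equality of complex numbers (the left-hand side and the squared norms being coerced to ℂ; in particular ⟪K̂(Vu), Vu⟫ is real). -/
/-- Corollary 2.3 of the paper.
`E` is a complex inner product space; the paper's pairing `⟪x, y⟫`, linear in the
first argument and conjugate-linear in the second, is `inner y x` in Mathlib's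
convention.  The conclusion is the identity
`2 Re ⟪Pu, VFu⟫ = ‖Fu‖² + ‖Pu‖² − ⟪K(Vu), Vu⟫` in `ℂ`. -/
theorem magnetic_pestov_corollary
    {E : Type*} [NormedAddCommGroup E] [InnerProductSpace ℂ E]
    (F P V κ K : E →ₗ[ℂ] E)
    (hFskew : ∀ u w : E, (inner ℂ w (F u) : ℂ) = -(inner ℂ (F w) u : ℂ))
    (hPskew : ∀ u w : E, (inner ℂ w (P u) : ℂ) = -(inner ℂ (P w) u : ℂ))
    (hVskew : ∀ u w : E, (inner ℂ w (V u) : ℂ) = -(inner ℂ (V w) u : ℂ))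
    (hVF : ∀ u : E, V (F u) - F (V u) = P u)
    (hVP : ∀ u : E, V (P u) - P (V u) = -F u + κ (V u))
    (hFP : ∀ u : E, F (P u) - P (F u) = -κ (F u) + K (V u))
    (hVκ : ∀ u : E, V (κ u) = κ (V u)) :
    ∀ u : E,
      ((2 * (Complex.re (inner ℂ (V (F u)) (P u) : ℂ)) : ℝ) : ℂ)
        = (‖F u‖ : ℂ) ^ 2 + (‖P u‖ : ℂ) ^ 2 - (inner ℂ (V u) (K (V u)) : ℂ) := by
  -- skew-symmetry transferred to the other slot via conjugation
  have hFskew' : ∀ u w : E, (inner ℂ (F u) w : ℂ) = -(inner ℂ u (F w) : ℂ) := by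
    intro u w
    have h := congrArg (starRingEnd ℂ) (hFskew u w)
    simpa using h
  have hPskew' : ∀ u w : E, (inner ℂ (P u) w : ℂ) = -(inner ℂ u (P w) : ℂ) := by
    intro u w
    have h := congrArg (starRingEnd ℂ) (hPskew u w)
    simpa using h
  have hVskew' : ∀ u w : E, (inner ℂ (V u) w : ℂ) = -(inner ℂ u (V w) : ℂ) := by
    intro u w
    have h := congrArg (starRingEnd ℂ) (hVskew u w)
    simpa using h
  -- (*) : the operator κ ∘ V is skew-symmetric
  have hkV : ∀ w x : E, (inner ℂ w (κ (V x)) : ℂ) = -(inner ℂ (κ (V w)) x : ℂ) := by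
    intro w x
    have h := congrArg (fun z : E => (inner ℂ w z : ℂ)) (hVP x)
    simp only [inner_sub_right, inner_add_right, inner_neg_right] at h
    have e1 : (inner ℂ w (V (P x)) : ℂ) = inner ℂ (P (V w)) x := by
      rw [hVskew (P x) w, hPskew x (V w)]; ring
    have e2 : (inner ℂ w (P (V x)) : ℂ) = inner ℂ (V (P w)) x := by
      rw [hPskew (V x) w, hVskew x (P w)]; ring
    have e4 : (inner ℂ w (F x) : ℂ) = -(inner ℂ (F w) x : ℂ) := hFskew x w
    rw [e1, e2, e4] at h
    have e3 : (inner ℂ (V (P w)) x : ℂ) - inner ℂ (P (V w)) x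
        = -(inner ℂ (F w) x : ℂ) + inner ℂ (κ (V w)) x := by
      have h' := congrArg (fun z : E => (inner ℂ z x : ℂ)) (hVP w)
      simpa [inner_sub_left, inner_add_left, inner_neg_left] using h'
    linear_combination -h - e3
  -- pointwise symmetry of κ tested against V
  have hksym : ∀ a b : E, (inner ℂ (V a) (κ b) : ℂ) = inner ℂ (κ (V a)) b := by
    intro a b
    have h := hkV a b
    rw [← hVκ b, hVskew (κ b) a] at h
    linear_combination -h
  have hnorm : ∀ x : E, (inner ℂ x x : ℂ) = (‖x‖ : ℂ) ^ 2 := fun x =>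
    inner_self_eq_norm_sq_to_K x
  intro u
  set Z : ℂ := (inner ℂ (V (F u)) (P u) : ℂ) with hZ
  have hre : ((2 * Complex.re Z : ℝ) : ℂ) = Z + (starRingEnd ℂ) Z :=
    (Complex.add_conj Z).symm
  have hconj : (starRingEnd ℂ) Z = (inner ℂ (P u) (V (F u)) : ℂ) := by
    rw [hZ, inner_conj_symm]
  have hVFu : V (F u) = P u + F (V u) := sub_eq_iff_eq_add.mp (hVF u)
  have hVPu : V (P u) = (-F u + κ (V u)) + P (V u) := sub_eq_iff_eq_add.mp (hVP u)
  have hFPu : F (P u) = (-κ (F u) + K (V u)) + P (F u) := sub_eq_iff_eq_add.mp (hFP u)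
  have h1 : Z = -(inner ℂ (V u) (F (P u)) : ℂ) + (‖P u‖ : ℂ) ^ 2 := by
    rw [hZ, hVFu, inner_add_left, hnorm,
      hFskew' (V u) (P u)]
    ring
  have h2 : (inner ℂ (P u) (V (F u)) : ℂ)
      = (inner ℂ (V u) (P (F u)) : ℂ) + (‖F u‖ : ℂ) ^ 2 - inner ℂ (κ (V u)) (F u) := by
    rw [hVskew (F u) (P u), hVPu, inner_add_left, inner_add_left, inner_neg_left,
      hnorm, hPskew' (V u) (F u)]
    ring
  have h3 : (inner ℂ (V u) (F (P u)) : ℂ) - inner ℂ (V u) (P (F u))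
      = -(inner ℂ (V u) (κ (F u)) : ℂ) + inner ℂ (V u) (K (V u)) := by
    rw [hFPu, inner_add_right, inner_add_right, inner_neg_right]
    ring
  have h4 : (inner ℂ (V u) (κ (F u)) : ℂ) = inner ℂ (κ (V u)) (F u) := hksym u (F u)
  linear_combination hre + hconj + h1 + h2 - h3 + h4
end

section
/- (Per-mode Pestov identity, equation (eqn:proof1).) If u ∈ E satisfies Vu = i k u for an integer k, then (k² + 1)‖Fu‖² − k² ⟪K̂u, u⟫ = ‖VFu‖², as an equality of complex numbers (the squared norms being coerced to ℂ). -/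
/-- Per-mode Pestov identity (equation (3.1) of the paper): if `Vu = iku` then
`(k² + 1)‖Fu‖² − k²⟪Ku, u⟫ = ‖VFu‖².  The paper's pairing `⟪x, y⟫`, linear in
the first argument and conjugate-linear in the second, is `inner y x` in
Mathlib's convention. -/
theorem per_mode_pestov_identity
    {E : Type*} [NormedAddCommGroup E] [InnerProductSpace ℂ E]
    (F P V κ K : E →ₗ[ℂ] E)
    (hFskew : ∀ u w : E, (inner ℂ w (F u) : ℂ) = -(inner ℂ (F w) u : ℂ))
    (hPskew : ∀ u w : E, (inner ℂ w (P u) : ℂ) = -(inner ℂ (P w) u : ℂ))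
    (hVskew : ∀ u w : E, (inner ℂ w (V u) : ℂ) = -(inner ℂ (V w) u : ℂ))
    (hVF : ∀ u : E, V (F u) - F (V u) = P u)
    (hVP : ∀ u : E, V (P u) - P (V u) = -F u + κ (V u))
    (hFP : ∀ u : E, F (P u) - P (F u) = -κ (F u) + K (V u))
    (hVκ : ∀ u : E, V (κ u) = κ (V u))
    (k : ℤ) (u : E) (hu : V u = (Complex.I * (k : ℂ)) • u) :
    ((k : ℂ) ^ 2 + 1) * (‖F u‖ : ℂ) ^ 2 - (k : ℂ) ^ 2 * (inner ℂ u (K u) : ℂ)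
      = (‖V (F u)‖ : ℂ) ^ 2 := by
  set l : ℂ := Complex.I * (k : ℂ) with hl
  have hconj : (starRingEnd ℂ) l = -l := by
    simp [hl, Complex.conj_I]
  have hlsq : l * l = -((k : ℂ) ^ 2) := by
    rw [hl]; ring_nf; rw [Complex.I_sq]; ring
  -- E-level consequences of the structural relations
  have h1 : V (F u) = l • F u + P u := by
    have h := hVF u
    rw [hu, map_smul, sub_eq_iff_eq_add] at h
    rw [h]; abel
  have h2 : V (P u) = l • P u - F u + l • κ u := by
    have h := hVP u
    rw [hu, map_smul, map_smul, sub_eq_iff_eq_add] at h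
    rw [h]; abel
  have h3 : F (P u) = P (F u) - κ (F u) + l • K u := by
    have h := hFP u
    rw [hu, map_smul, sub_eq_iff_eq_add] at h
    rw [h]; abel
  have h4 : V (P (F u)) = l • P (F u) + P (P u) - F (F u) + l • κ (F u) + κ (P u) := by
    have h := hVP (F u)
    rw [h1, map_add, map_smul, map_add, map_smul, sub_eq_iff_eq_add] at h
    rw [h]; abel
  have h5 : κ (P u) = V (κ (F u)) - l • κ (F u) := by
    have h := hVκ (F u)
    rw [h1, map_add, map_smul] at h
    rw [h]; abel
  -- inner product computations
  have hnF : (inner ℂ (F u) (F u) : ℂ) = (‖F u‖ : ℂ) ^ 2 := inner_self_eq_norm_sq_to_K _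
  have e1 : (inner ℂ (P u) (P u) : ℂ)
      = (inner ℂ (F u) (F u) : ℂ) + l * (inner ℂ (κ u) (F u) : ℂ) := by
    have hs := hVskew (F u) (P u)
    rw [h1, h2] at hs
    simp only [inner_add_left, inner_add_right, inner_sub_left, inner_smul_left,
      inner_smul_right, hconj] at hs
    linear_combination hs
  have e0 : (inner ℂ (κ (P u)) u : ℂ) = 0 := by
    have hs := hVskew u (κ (F u))
    rw [hu] at hs
    rw [h5]
    simp only [inner_sub_left, inner_smul_left, inner_smul_right, hconj] at hs ⊢
    linear_combination hs
  have e2 : l * (inner ℂ (κ (F u)) u : ℂ) = -(l * (inner ℂ (κ u) (F u) : ℂ)) := by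
    have hs := hVskew u (P (F u))
    rw [hu] at hs
    have hPP := hPskew u (P u)
    have hFF := hFskew u (F u)
    rw [h4] at hs
    simp only [inner_add_left, inner_sub_left, inner_smul_left, inner_smul_right,
      hconj] at hs
    linear_combination -hs + hPP - hFF + e0 - e1
  have e3 : (inner ℂ (P u) (F u) : ℂ) - (inner ℂ (F u) (P u) : ℂ)
      = (inner ℂ (κ (F u)) u : ℂ) + l * (inner ℂ (K u) u : ℂ) := by
    have hs := hFskew u (P u)
    have hp := hPskew u (F u)
    rw [h3] at hs
    simp only [inner_add_left, inner_sub_left, inner_smul_left, hconj] at hs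
    linear_combination hs - hp
  have e4 : ((k : ℂ) ^ 2 + 1) * (‖F u‖ : ℂ) ^ 2 - (k : ℂ) ^ 2 * (inner ℂ (K u) u : ℂ)
      = (‖V (F u)‖ : ℂ) ^ 2 := by
    have hn : (inner ℂ (V (F u)) (V (F u)) : ℂ) = (‖V (F u)‖ : ℂ) ^ 2 :=
      inner_self_eq_norm_sq_to_K _
    conv at hn => lhs; rw [h1]
    simp only [inner_add_left, inner_add_right, inner_smul_left, inner_smul_right,
      hconj] at hn
    linear_combination hn - e1 - e2 - l * e3 - ((k : ℂ) ^ 2 + 1) * hnF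
      + ((inner ℂ (F u) (F u) : ℂ) - (inner ℂ (K u) u : ℂ)) * hlsq
  have e5 := congrArg (starRingEnd ℂ) e4
  simp only [map_sub, map_add, map_mul, map_pow, map_one, map_intCast,
    Complex.conj_ofReal, inner_conj_symm] at e5
  exact e5
end

section
/- (Mode-norm decomposition.) If u ∈ E satisfies Vu = i k u for an integer k, then Fu = η⁺u + η⁻u + i k κ̂u, and moreover ‖Fu‖² = ‖η⁺u‖² + ‖η⁻u‖² + k²‖κ̂u‖² and ‖VFu‖² = (k+1)²‖η⁺u‖² + (k−1)²‖η⁻u‖² + k⁴‖κ̂u‖². -/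
open Complex

private lemma eig_orth {E : Type*} [NormedAddCommGroup E] [InnerProductSpace ℂ E]
    (V : E →ₗ[ℂ] E)
    (hVskew : ∀ u w : E, (inner ℂ w (V u) : ℂ) = -(inner ℂ (V w) u : ℂ))
    {a b : ℝ} {v w : E}
    (hv : V v = (Complex.I * (a : ℂ)) • v) (hw : V w = (Complex.I * (b : ℂ)) • w)
    (hab : a ≠ b) : (inner ℂ w v : ℂ) = 0 := by
  have h := hVskew v w
  rw [hv, hw, inner_smul_right, inner_smul_left] at h
  have hc : (starRingEnd ℂ) (Complex.I * (b : ℂ)) = -(Complex.I * (b : ℂ)) := by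
    simp [map_mul, Complex.conj_I]
  rw [hc] at h
  have h2 : (Complex.I * ((a : ℂ) - (b : ℂ))) * (inner ℂ w v : ℂ) = 0 := by
    linear_combination h
  have hne : (Complex.I * ((a : ℂ) - (b : ℂ))) ≠ 0 := by
    apply mul_ne_zero Complex.I_ne_zero
    simp only [sub_ne_zero]
    exact_mod_cast hab
  exact (mul_eq_zero.mp h2).resolve_left hne

private lemma pyth3 {E : Type*} [NormedAddCommGroup E] [InnerProductSpace ℂ E] {a b c : E}
    (hab : (inner ℂ a b : ℂ) = 0) (hac : (inner ℂ a c : ℂ) = 0) (hbc : (inner ℂ b c : ℂ) = 0) :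
    ‖a + b + c‖ ^ 2 = ‖a‖ ^ 2 + ‖b‖ ^ 2 + ‖c‖ ^ 2 := by
  rw [norm_add_sq (𝕜 := ℂ), norm_add_sq (𝕜 := ℂ)]
  simp [inner_add_left, hab, hac, hbc]

/-- Mode-norm decomposition: if `Vu = iku` then `Fu = η⁺u + η⁻u + ikκu`, and the
norms decompose as `‖Fu‖² = ‖η⁺u‖² + ‖η⁻u‖² + k²‖κu‖²` and
`‖VFu‖² = (k+1)²‖η⁺u‖² + (k−1)²‖η⁻u‖² + k⁴‖κu‖²`. -/
theorem mode_norm_decomposition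
    {E : Type*} [NormedAddCommGroup E] [InnerProductSpace ℂ E]
    (F P V κ K : E →ₗ[ℂ] E)
    (hFskew : ∀ u w : E, (inner ℂ w (F u) : ℂ) = -(inner ℂ (F w) u : ℂ))
    (hPskew : ∀ u w : E, (inner ℂ w (P u) : ℂ) = -(inner ℂ (P w) u : ℂ))
    (hVskew : ∀ u w : E, (inner ℂ w (V u) : ℂ) = -(inner ℂ (V w) u : ℂ))
    (hVF : ∀ u : E, V (F u) - F (V u) = P u)
    (hVP : ∀ u : E, V (P u) - P (V u) = -F u + κ (V u))
    (hFP : ∀ u : E, F (P u) - P (F u) = -κ (F u) + K (V u))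
    (hVκ : ∀ u : E, V (κ u) = κ (V u))
    (X ηp ηm : E →ₗ[ℂ] E)
    (hX : ∀ u : E, X u = F u - κ (V u))
    (hηp : ∀ u : E, ηp u = (2 : ℂ)⁻¹ • (X u - Complex.I • P u))
    (hηm : ∀ u : E, ηm u = (2 : ℂ)⁻¹ • (X u + Complex.I • P u))
    (k : ℤ) (u : E) (hu : V u = (Complex.I * (k : ℂ)) • u) :
    F u = ηp u + ηm u + (Complex.I * (k : ℂ)) • κ u ∧
    ‖F u‖ ^ 2 = ‖ηp u‖ ^ 2 + ‖ηm u‖ ^ 2 + (k : ℝ) ^ 2 * ‖κ u‖ ^ 2 ∧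
    ‖V (F u)‖ ^ 2 = ((k : ℝ) + 1) ^ 2 * ‖ηp u‖ ^ 2 + ((k : ℝ) - 1) ^ 2 * ‖ηm u‖ ^ 2
        + (k : ℝ) ^ 4 * ‖κ u‖ ^ 2 := by
  have hκu : V (κ u) = (Complex.I * (k : ℂ)) • κ u := by
    rw [hVκ, hu, map_smul]
  have hVFu : V (F u) = (Complex.I * (k : ℂ)) • F u + P u := by
    have h := hVF u
    rw [hu, map_smul] at h
    linear_combination (norm := module) h
  have hVPu : V (P u) = (Complex.I * (k : ℂ)) • P u - F u + (Complex.I * (k : ℂ)) • κ u := by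
    have h := hVP u
    rw [hu, map_smul, map_smul] at h
    linear_combination (norm := module) h
  have hXu : X u = F u - (Complex.I * (k : ℂ)) • κ u := by
    rw [hX, hu, map_smul]
  have hηpu : ηp u = (2 : ℂ)⁻¹ • (F u - (Complex.I * (k : ℂ)) • κ u - Complex.I • P u) := by
    rw [hηp, hXu]
  have hηmu : ηm u = (2 : ℂ)⁻¹ • (F u - (Complex.I * (k : ℂ)) • κ u + Complex.I • P u) := by
    rw [hηm, hXu]
  -- eigenvector properties
  have hVηp : V (ηp u) = (Complex.I * ((k : ℂ) + 1)) • ηp u := by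
    rw [hηpu, map_smul, map_sub, map_sub, map_smul, map_smul, hVFu, hVPu, hκu]
    match_scalars <;> (ring_nf; try simp [Complex.I_sq]; try ring)
  have hVηm : V (ηm u) = (Complex.I * ((k : ℂ) - 1)) • ηm u := by
    rw [hηmu, map_smul, map_add, map_sub, map_smul, map_smul, hVFu, hVPu, hκu]
    match_scalars <;> (ring_nf; try simp [Complex.I_sq]; try ring)
  -- decomposition
  have hdec : F u = ηp u + ηm u + (Complex.I * (k : ℂ)) • κ u := by
    rw [hηpu, hηmu]
    match_scalars <;> ring
  -- orthogonality
  have hcast1 : (Complex.I * ((k : ℂ) + 1)) = (Complex.I * ((((k : ℝ) + 1) : ℝ) : ℂ)) := by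
    push_cast; ring
  have hcast2 : (Complex.I * ((k : ℂ) - 1)) = (Complex.I * ((((k : ℝ) - 1) : ℝ) : ℂ)) := by
    push_cast; ring
  have hcast3 : (Complex.I * (k : ℂ)) = (Complex.I * (((k : ℝ) : ℝ) : ℂ)) := by
    push_cast; ring
  have hVηp' : V (ηp u) = (Complex.I * ((((k : ℝ) + 1) : ℝ) : ℂ)) • ηp u := by
    rw [hVηp, hcast1]
  have hVηm' : V (ηm u) = (Complex.I * ((((k : ℝ) - 1) : ℝ) : ℂ)) • ηm u := by
    rw [hVηm, hcast2]
  have hκu' : V (κ u) = (Complex.I * (((k : ℝ) : ℝ) : ℂ)) • κ u := by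
    rw [hκu, hcast3]
  have o_pm : (inner ℂ (ηp u) (ηm u) : ℂ) = 0 :=
    eig_orth V hVskew hVηm' hVηp' (by linarith)
  have o_pk : (inner ℂ (ηp u) (κ u) : ℂ) = 0 :=
    eig_orth V hVskew hκu' hVηp' (by linarith)
  have o_mk : (inner ℂ (ηm u) (κ u) : ℂ) = 0 :=
    eig_orth V hVskew hκu' hVηm' (by linarith)
  -- norms of scaled eigenvectors
  have nI : ∀ (r : ℝ) (x : E), ‖(Complex.I * ((r : ℝ) : ℂ)) • x‖ ^ 2 = r ^ 2 * ‖x‖ ^ 2 := by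
    intro r x
    rw [norm_smul, norm_mul, Complex.norm_I, one_mul, Complex.norm_real, mul_pow,
      Real.norm_eq_abs, _root_.sq_abs]
  refine ⟨hdec, ?_, ?_⟩
  · rw [hdec, pyth3 o_pm (by rw [inner_smul_right, o_pk, mul_zero])
      (by rw [inner_smul_right, o_mk, mul_zero])]
    rw [hcast3, nI]
  · have hVF3 : V (F u) = (Complex.I * ((((k : ℝ) + 1) : ℝ) : ℂ)) • ηp u
        + (Complex.I * ((((k : ℝ) - 1) : ℝ) : ℂ)) • ηm u
        + (Complex.I * (k : ℂ)) • ((Complex.I * (((k : ℝ) : ℝ) : ℂ)) • κ u) := by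
      rw [hdec, map_add, map_add, hVηp', hVηm', map_smul, hκu']
    rw [hVF3, pyth3 (by rw [inner_smul_left, inner_smul_right, o_pm]; ring)
      (by rw [inner_smul_left, inner_smul_right, inner_smul_right, o_pk]; ring)
      (by rw [inner_smul_left, inner_smul_right, inner_smul_right, o_mk]; ring)]
    rw [nI, nI]
    have : ‖(Complex.I * (k : ℂ)) • (Complex.I * (((k : ℝ) : ℝ) : ℂ)) • κ u‖ ^ 2
        = (k : ℝ) ^ 4 * ‖κ u‖ ^ 2 := by
      rw [smul_smul]
      have h4 : (Complex.I * (k : ℂ)) * (Complex.I * (((k : ℝ) : ℝ) : ℂ))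
          = ((((-(k : ℝ) ^ 2) : ℝ)) : ℂ) * 1 := by
        push_cast
        ring_nf
        simp [Complex.I_sq]
        try ring
      rw [h4, mul_one, norm_smul, Complex.norm_real, mul_pow, Real.norm_eq_abs,
        _root_.sq_abs]
      ring
    rw [this]
    try ring
end

section
/- (Key per-mode identity in the proof of Theorem 3.1.) If u ∈ E satisfies Vu = i k u for an integer k, then 2k‖η⁻u‖² − k²⟪K̂u, u⟫ + k²‖κ̂u‖² = 2k‖η⁺u‖², as an equality of complex numbers (the squared norms being coerced to ℂ). -/
set_option maxHeartbeats 1000000 in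
/-- Key per-mode identity in the proof of Theorem 3.1: if `Vu = iku` then
`2k‖η⁻u‖² − k²⟪Ku, u⟫ + k²‖κu‖² = 2k‖η⁺u‖²` as complex numbers.  The paper's
pairing `⟪x, y⟫`, linear in the first argument and conjugate-linear in the
second, is `inner y x` in Mathlib's convention. -/
theorem key_per_mode_identity
    {E : Type*} [NormedAddCommGroup E] [InnerProductSpace ℂ E]
    (F P V κ K : E →ₗ[ℂ] E)
    (hFskew : ∀ u w : E, (inner ℂ w (F u) : ℂ) = -(inner ℂ (F w) u : ℂ))
    (hPskew : ∀ u w : E, (inner ℂ w (P u) : ℂ) = -(inner ℂ (P w) u : ℂ))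
    (hVskew : ∀ u w : E, (inner ℂ w (V u) : ℂ) = -(inner ℂ (V w) u : ℂ))
    (hVF : ∀ u : E, V (F u) - F (V u) = P u)
    (hVP : ∀ u : E, V (P u) - P (V u) = -F u + κ (V u))
    (hFP : ∀ u : E, F (P u) - P (F u) = -κ (F u) + K (V u))
    (hVκ : ∀ u : E, V (κ u) = κ (V u))
    (X ηp ηm : E →ₗ[ℂ] E)
    (hX : ∀ u : E, X u = F u - κ (V u))
    (hηp : ∀ u : E, ηp u = (2 : ℂ)⁻¹ • (X u - Complex.I • P u))
    (hηm : ∀ u : E, ηm u = (2 : ℂ)⁻¹ • (X u + Complex.I • P u))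
    (k : ℤ) (u : E) (hu : V u = (Complex.I * (k : ℂ)) • u) :
    2 * (k : ℂ) * (‖ηm u‖ : ℂ) ^ 2 - (k : ℂ) ^ 2 * (inner ℂ u (K u) : ℂ)
        + (k : ℂ) ^ 2 * (‖κ u‖ : ℂ) ^ 2
      = 2 * (k : ℂ) * (‖ηp u‖ : ℂ) ^ 2 := by
  set c : ℂ := Complex.I * (k : ℂ) with hc
  have hcconj : (starRingEnd ℂ) c = -c := by simp [hc]
  -- pointwise vector identities
  have hVκu : V (κ u) = c • κ u := by rw [hVκ, hu, map_smul]
  have hXu : X u = F u - c • κ u := by rw [hX, hu, map_smul]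
  have hFu : F u = X u + c • κ u := by rw [hXu]; abel
  have hVFu : V (F u) = c • F u + P u := by
    have h := hVF u
    rw [hu, map_smul] at h
    linear_combination (norm := module) h
  have hVPu : V (P u) = c • P u - X u := by
    have h := hVP u
    rw [hu, map_smul, map_smul] at h
    rw [hXu]
    linear_combination (norm := module) h
  have hVXu : V (X u) = c • X u + P u := by
    rw [hXu, map_sub, map_smul, hVFu, hVκu]
    module
  -- scalar identities
  -- s1 : ⟨κu, Pu⟩ = 0
  have s1 : (inner ℂ (κ u) (P u) : ℂ) = 0 := by
    have h := hVskew (F u) (κ u)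
    rw [hVFu, hVκu, inner_add_right, inner_smul_right, inner_smul_left, hcconj] at h
    linear_combination h
  have s1' : (inner ℂ (P u) (κ u) : ℂ) = 0 := by
    rw [← inner_conj_symm, s1]; simp
  -- s2 : ⟨κu, Xu⟩ = 0
  have s2 : (inner ℂ (κ u) (X u) : ℂ) = 0 := by
    have h := hVskew (P u) (κ u)
    rw [hVPu, hVκu, inner_sub_right, inner_smul_right, inner_smul_left, hcconj, s1] at h
    linear_combination -h
  have s2' : (inner ℂ (X u) (κ u) : ℂ) = 0 := by
    rw [← inner_conj_symm, s2]; simp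
  -- s3 : ‖Pu‖² = ‖Xu‖²
  have s3 : (inner ℂ (P u) (P u) : ℂ) = inner ℂ (X u) (X u) := by
    have h := hVskew (X u) (P u)
    rw [hVXu, hVPu, inner_add_right, inner_smul_right, inner_sub_left,
      inner_smul_left, hcconj] at h
    linear_combination h
  -- s4 : ⟨u, κPu⟩ = 0
  have s4 : (inner ℂ u (κ (P u)) : ℂ) = 0 := by
    have h := hVskew (κ (F u)) u
    rw [hVκ (F u), hVFu, map_add, map_smul, inner_add_right, inner_smul_right,
      hu, inner_smul_left, hcconj] at h
    linear_combination h
  -- s7 : c * ⟨u, κFu⟩ = ⟨Pu,Pu⟩ - ⟨Fu,Fu⟩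
  have s7 : c * (inner ℂ u (κ (F u)) : ℂ)
      = (inner ℂ (P u) (P u) : ℂ) - (inner ℂ (F u) (F u) : ℂ) := by
    have h := hVP (F u)
    rw [hVFu, map_add, map_smul, map_add, map_smul] at h
    have h2 := congrArg (fun y => (inner ℂ u y : ℂ)) h
    simp only [inner_sub_right, inner_add_right, inner_smul_right, inner_neg_right] at h2
    have h3 : (inner ℂ u (V (P (F u))) : ℂ) = c * inner ℂ u (P (F u)) := by
      rw [hVskew (P (F u)) u, hu, inner_smul_left, hcconj]; ring
    have h4 : (inner ℂ u (P (P u)) : ℂ) = -(inner ℂ (P u) (P u) : ℂ) := hPskew (P u) u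
    have h5 : (inner ℂ u (F (F u)) : ℂ) = -(inner ℂ (F u) (F u) : ℂ) := hFskew (F u) u
    rw [h3, h4, h5, s4] at h2
    linear_combination -h2
  -- s8 : ⟨Fu,Fu⟩ = ⟨Xu,Xu⟩ + k² ⟨κu,κu⟩
  have s8 : (inner ℂ (F u) (F u) : ℂ)
      = (inner ℂ (X u) (X u) : ℂ) + (k : ℂ) ^ 2 * (inner ℂ (κ u) (κ u) : ℂ) := by
    rw [hFu]
    simp only [inner_add_left, inner_add_right, inner_smul_left, inner_smul_right,
      hcconj, s2, s2']
    rw [hc]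
    linear_combination (-(k : ℂ) ^ 2 * (inner ℂ (κ u) (κ u) : ℂ)) * Complex.I_sq
  -- d1, d2
  have d1 : (inner ℂ (X u) (P u) : ℂ) = -(inner ℂ u (F (P u)) : ℂ) := by
    have e1 : (inner ℂ (F u) (P u) : ℂ) = -(inner ℂ u (F (P u)) : ℂ) := by
      calc (inner ℂ (F u) (P u) : ℂ)
          = (starRingEnd ℂ) (inner ℂ (P u) (F u) : ℂ) := (inner_conj_symm _ _).symm
        _ = (starRingEnd ℂ) (-(inner ℂ (F (P u)) u : ℂ)) := by rw [hFskew u (P u)]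
        _ = -(inner ℂ u (F (P u)) : ℂ) := by rw [map_neg, inner_conj_symm]
    rw [hXu, inner_sub_left, inner_smul_left, s1, e1]; ring
  have d2 : (inner ℂ (P u) (X u) : ℂ) = -(inner ℂ u (P (F u)) : ℂ) := by
    have e2 : (inner ℂ (P u) (F u) : ℂ) = -(inner ℂ u (P (F u)) : ℂ) := by
      calc (inner ℂ (P u) (F u) : ℂ)
          = (starRingEnd ℂ) (inner ℂ (F u) (P u) : ℂ) := (inner_conj_symm _ _).symm
        _ = (starRingEnd ℂ) (-(inner ℂ (P (F u)) u : ℂ)) := by rw [hPskew u (F u)]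
        _ = -(inner ℂ u (P (F u)) : ℂ) := by rw [map_neg, inner_conj_symm]
    rw [hXu, inner_sub_right, inner_smul_right, s1', e2]; ring
  -- d3 : structural relation paired with u
  have d3 : (inner ℂ u (F (P u)) : ℂ)
      = (inner ℂ u (P (F u)) : ℂ) - (inner ℂ u (κ (F u)) : ℂ) + c * (inner ℂ u (K u) : ℂ) := by
    have h := hFP u
    rw [hu, map_smul] at h
    have h2 := congrArg (fun y => (inner ℂ u y : ℂ)) h
    simp only [inner_sub_right, inner_add_right, inner_neg_right, inner_smul_right] at h2
    linear_combination h2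
  -- eliminate c from the hypotheses we feed to the final ring computation
  rw [hc] at s7 d3
  -- final assembly
  have nsq : ∀ x : E, ((‖x‖ : ℂ)) ^ 2 = (inner ℂ x x : ℂ) := fun x =>
    (inner_self_eq_norm_sq_to_K (𝕜 := ℂ) x).symm
  rw [nsq (ηm u), nsq (ηp u), nsq (κ u)]
  simp only [hηm, hηp, inner_smul_left, inner_smul_right, inner_add_left, inner_add_right,
    inner_sub_left, inner_sub_right, map_inv₀, Complex.conj_I, Complex.conj_ofNat]
  linear_combination ((k : ℂ) * Complex.I) * d1 - ((k : ℂ) * Complex.I) * d2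
    - ((k : ℂ) * Complex.I) * d3 + s7 - s8 + s3
    - (k : ℂ) ^ 2 * (inner ℂ u (K u) : ℂ) * Complex.I_sq
end

section
/- (Inequality (GK1) under pinched negative magnetic curvature.) Assume in addition that a, b > 0 and that for every w ∈ E the number ⟪K̂w, w⟫ is real and satisfies −2b‖w‖² ≤ ⟪K̂w, w⟫ ≤ −2a‖w‖². If u ∈ E satisfies Vu = i k u for an integer k > 0, then ‖η⁻u‖² + k a ‖u‖² + (k/2)‖κ̂u‖² ≤ ‖η⁺u‖² ≤ ‖η⁻u‖² + k b ‖u‖² + (k/2)‖κ̂u‖². -/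
/-- Inequality (4.2) of the paper under pinched negative magnetic curvature
`−2b‖w‖² ≤ ⟪Kw, w⟫ ≤ −2a‖w‖²` (with `⟪Kw, w⟫` real): for `Vu = iku` with `k > 0`,
`‖η⁻u‖² + ka‖u‖² + (k/2)‖κu‖² ≤ ‖η⁺u‖² ≤ ‖η⁻u‖² + kb‖u‖² + (k/2)‖κu‖²`. -/
theorem GK1_inequality
    {E : Type*} [NormedAddCommGroup E] [InnerProductSpace ℂ E]
    (F P V κ K : E →ₗ[ℂ] E)
    (hFskew : ∀ u w : E, (inner ℂ w (F u) : ℂ) = -(inner ℂ (F w) u : ℂ))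
    (hPskew : ∀ u w : E, (inner ℂ w (P u) : ℂ) = -(inner ℂ (P w) u : ℂ))
    (hVskew : ∀ u w : E, (inner ℂ w (V u) : ℂ) = -(inner ℂ (V w) u : ℂ))
    (hVF : ∀ u : E, V (F u) - F (V u) = P u)
    (hVP : ∀ u : E, V (P u) - P (V u) = -F u + κ (V u))
    (hFP : ∀ u : E, F (P u) - P (F u) = -κ (F u) + K (V u))
    (hVκ : ∀ u : E, V (κ u) = κ (V u))
    (X ηp ηm : E →ₗ[ℂ] E)
    (hX : ∀ u : E, X u = F u - κ (V u))
    (hηp : ∀ u : E, ηp u = (2 : ℂ)⁻¹ • (X u - Complex.I • P u))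
    (hηm : ∀ u : E, ηm u = (2 : ℂ)⁻¹ • (X u + Complex.I • P u))
    (a b : ℝ) (ha : 0 < a) (hb : 0 < b)
    (hKreal : ∀ w : E, (inner ℂ w (K w) : ℂ).im = 0)
    (hKlb : ∀ w : E, -2 * b * ‖w‖ ^ 2 ≤ (inner ℂ w (K w) : ℂ).re)
    (hKub : ∀ w : E, (inner ℂ w (K w) : ℂ).re ≤ -2 * a * ‖w‖ ^ 2)
    (k : ℤ) (hk : 0 < k) (u : E) (hu : V u = (Complex.I * (k : ℂ)) • u) :
    ‖ηm u‖ ^ 2 + (k : ℝ) * a * ‖u‖ ^ 2 + ((k : ℝ) / 2) * ‖κ u‖ ^ 2 ≤ ‖ηp u‖ ^ 2 ∧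
    ‖ηp u‖ ^ 2 ≤ ‖ηm u‖ ^ 2 + (k : ℝ) * b * ‖u‖ ^ 2 + ((k : ℝ) / 2) * ‖κ u‖ ^ 2 := by
  set lam : ℂ := Complex.I * (k : ℂ) with hlam
  have hconj_lam : (starRingEnd ℂ) lam = -lam := by
    rw [hlam, map_mul, Complex.conj_I, map_intCast]; ring
  have hk0 : lam ≠ 0 := by
    rw [hlam]
    exact mul_ne_zero Complex.I_ne_zero (by exact_mod_cast hk.ne')
  -- V (κ u) = lam • κ u
  have hκV : V (κ u) = lam • κ u := by rw [hVκ, hu, map_smul]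
  -- pairing against u or κ u moves V to an eigenvalue
  have L1 : ∀ w : E, (inner ℂ u (V w) : ℂ) = lam * inner ℂ u w := by
    intro w
    rw [hVskew w u, hu, inner_smul_left, hconj_lam]; ring
  have L2 : ∀ w : E, (inner ℂ (κ u) (V w) : ℂ) = lam * inner ℂ (κ u) w := by
    intro w
    rw [hVskew w (κ u), hκV, inner_smul_left, hconj_lam]; ring
  -- P u in terms of V (F u)
  have hPu : P u = V (F u) - lam • F u := by
    rw [← hVF u, hu, map_smul]
  have hVPu : V (P u) = lam • P u - F u + lam • κ u := by
    have h := hVP u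
    rw [hu, map_smul, map_smul] at h
    have h2 : V (P u) = lam • P u + (-F u + lam • κ u) := by
      rw [← h]; abel
    rw [h2]; abel
  -- c1 : ⟪κu, Pu⟫ = 0
  have c1 : (inner ℂ (κ u) (P u) : ℂ) = 0 := by
    rw [hPu, inner_sub_right, inner_smul_right, L2]; ring
  have c1' : (inner ℂ (P u) (κ u) : ℂ) = 0 := by
    rw [← inner_conj_symm, c1, map_zero]
  -- c2 : ⟪κu, Fu⟫ = lam * ⟪κu, κu⟫
  have c2 : (inner ℂ (κ u) (F u) : ℂ) = lam * inner ℂ (κ u) (κ u) := by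
    have h := L2 (P u)
    rw [hVPu, inner_add_right, inner_sub_right, inner_smul_right, inner_smul_right, c1] at h
    linear_combination -h
  have hQreal : ((inner ℂ (κ u) (κ u) : ℂ)) = ((‖κ u‖ ^ 2 : ℝ) : ℂ) := by
    push_cast; exact inner_self_eq_norm_sq_to_K (κ u)
  have hconjQ : (starRingEnd ℂ) (inner ℂ (κ u) (κ u) : ℂ) = inner ℂ (κ u) (κ u) := by
    rw [hQreal]; exact Complex.conj_ofReal _
  have c2' : (inner ℂ (F u) (κ u) : ℂ) = -lam * inner ℂ (κ u) (κ u) := by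
    rw [← inner_conj_symm, c2, map_mul, hconj_lam, hconjQ]
  -- c3 : ⟪u, P (κ u)⟫ = 0
  have c3 : (inner ℂ u (P (κ u)) : ℂ) = 0 := by
    rw [hPskew (κ u) u, c1', neg_zero]
  -- c4 : ⟪u, κ (P u)⟫ = 0
  have c4 : (inner ℂ u (κ (P u)) : ℂ) = 0 := by
    have hκPu : κ (P u) = V (κ (F u)) - lam • κ (F u) := by
      rw [hPu, map_sub, map_smul, hVκ]
    rw [hκPu, inner_sub_right, inner_smul_right, L1]; ring
  -- c5 : ⟪u, κ (κ u)⟫ = ⟪κu, κu⟫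
  have c5 : (inner ℂ u (κ (κ u)) : ℂ) = inner ℂ (κ u) (κ u) := by
    have h := hVP (κ u)
    rw [hκV, map_smul, map_smul] at h
    have h' := congrArg (fun w => (inner ℂ u w : ℂ)) h
    simp only [inner_sub_right, inner_add_right, inner_neg_right, inner_smul_right,
      L1, c3] at h'
    rw [hFskew (κ u) u, c2'] at h'
    have hmul : lam * inner ℂ u (κ (κ u)) = lam * (inner ℂ (κ u) (κ u) : ℂ) := by
      linear_combination -h'
    exact mul_left_cancel₀ hk0 hmul
  -- A' : pairing hVP (P u) with u
  have hA : (inner ℂ u (κ (F u)) : ℂ)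
      = inner ℂ (F u) (P u) + inner ℂ (P u) (F u) + lam * inner ℂ (κ u) (κ u) := by
    have h := hVP (P u)
    have h' := congrArg (fun w => (inner ℂ u w : ℂ)) h
    have hκVPu : κ (V (P u)) = lam • κ (P u) - κ (F u) + lam • κ (κ u) := by
      rw [hVPu, map_add, map_sub, map_smul, map_smul]
    simp only [inner_sub_right, inner_add_right, inner_neg_right, inner_smul_right, L1] at h'
    rw [hPskew (P u) u, hPskew (V (P u)) u, hFskew (P u) u, hκVPu] at h'
    simp only [inner_add_right, inner_sub_right, inner_smul_right, c4, c5] at h'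
    rw [hVPu] at h'
    simp only [inner_add_right, inner_sub_right, inner_smul_right, c1'] at h'
    linear_combination h'
  -- B' : pairing hFP u with u
  have hB : (inner ℂ u (κ (F u)) : ℂ)
      = inner ℂ (F u) (P u) - inner ℂ (P u) (F u) + lam * inner ℂ u (K u) := by
    have h := hFP u
    have h' := congrArg (fun w => (inner ℂ u w : ℂ)) h
    rw [hu, map_smul] at h'
    simp only [inner_sub_right, inner_add_right, inner_neg_right, inner_smul_right] at h'
    rw [hFskew (P u) u, hPskew (F u) u] at h'
    linear_combination h'
  -- the key value of ⟪Pu, Fu⟫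
  have hPF : (inner ℂ (P u) (F u) : ℂ)
      = lam / 2 * (inner ℂ u (K u) - inner ℂ (κ u) (κ u)) := by
    linear_combination (hB - hA) / 2
  have hconjR : (starRingEnd ℂ) (inner ℂ u (K u) : ℂ) = inner ℂ u (K u) :=
    Complex.conj_eq_iff_im.mpr (hKreal u)
  have hFPv : (inner ℂ (F u) (P u) : ℂ)
      = -lam / 2 * (inner ℂ u (K u) - inner ℂ (κ u) (κ u)) := by
    rw [← inner_conj_symm, hPF, map_mul, map_div₀, map_sub, hconjR, hconjQ, hconj_lam,
      map_ofNat]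
  -- norms of ηp u, ηm u
  have hXu : X u = F u - lam • κ u := by rw [hX, hu, map_smul]
  have hηpu : ηp u = (2 : ℂ)⁻¹ • (F u - lam • κ u - Complex.I • P u) := by rw [hηp, hXu]
  have hηmu : ηm u = (2 : ℂ)⁻¹ • (F u - lam • κ u + Complex.I • P u) := by rw [hηm, hXu]
  have key : (inner ℂ (ηp u) (ηp u) : ℂ) - inner ℂ (ηm u) (ηm u)
      = (k : ℂ) / 2 * (inner ℂ (κ u) (κ u) - inner ℂ u (K u)) := by
    rw [hηpu, hηmu]
    simp only [inner_smul_left, inner_smul_right, inner_sub_left, inner_sub_right,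
      inner_add_left, inner_add_right, map_inv₀, Complex.conj_I, map_ofNat, map_mul,
      map_intCast]
    rw [c1, c1', hPF, hFPv, hlam]
    linear_combination ((k:ℂ)/2) * ((inner ℂ u (K u) : ℂ) - (inner ℂ (κ u) (κ u) : ℂ))
      * Complex.I_mul_I
  -- pass to real parts
  have hre : ‖ηp u‖ ^ 2 - ‖ηm u‖ ^ 2
      = (k : ℝ) / 2 * (‖κ u‖ ^ 2 - (inner ℂ u (K u) : ℂ).re) := by
    have h1 : ((inner ℂ (ηp u) (ηp u) : ℂ)).re = ‖ηp u‖ ^ 2 := by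
      simpa using inner_self_eq_norm_sq (𝕜 := ℂ) (ηp u)
    have h2 : ((inner ℂ (ηm u) (ηm u) : ℂ)).re = ‖ηm u‖ ^ 2 := by
      simpa using inner_self_eq_norm_sq (𝕜 := ℂ) (ηm u)
    have h3 := congrArg Complex.re key
    rw [Complex.sub_re, h1, h2, hQreal] at h3
    have h4 : ((k : ℂ)) / 2 = (((k : ℝ) / 2 : ℝ) : ℂ) := by push_cast; ring
    rw [h4, Complex.re_ofReal_mul, Complex.sub_re, Complex.ofReal_re] at h3
    exact h3
  have hkpos : (0 : ℝ) < (k : ℝ) := by exact_mod_cast hk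
  constructor
  · nlinarith [hre, mul_le_mul_of_nonneg_left (hKub u) (le_of_lt hkpos)]
  · nlinarith [hre, mul_le_mul_of_nonneg_left (hKlb u) (le_of_lt hkpos)]
end

section
/- (Abstract core of Lemma 2.5.) Assume in addition that a > 0 and that for every w ∈ E the number ⟪K̂w, w⟫ is real and satisfies ⟪K̂w, w⟫ ≤ −a‖w‖². If u, v ∈ E satisfy Fu = v and Vv = 0, then v = 0, Vu = 0, Pu = 0, and Fu = 0; moreover, setting X := F − κ̂∘V, η⁺ := (X − iP)/2 and η⁻ := (X + iP)/2, one also has η⁺u = 0 and η⁻u = 0. -/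
private lemma inner_self_ofReal {E : Type*} [NormedAddCommGroup E]
    [InnerProductSpace ℂ E] (x : E) :
    (inner ℂ x x : ℂ) = ((‖x‖ ^ 2 : ℝ) : ℂ) := by
  rw [inner_self_eq_norm_sq_to_K]; norm_cast

/-- Abstract core of Lemma 2.5: under negative curvature `⟪Kw, w⟫ ≤ −a‖w‖²`
(with `⟪Kw, w⟫` real), if `Fu = v` and `Vv = 0` then `v = 0` and `u` is
"constant", i.e. `Vu = Pu = Fu = 0` and `η⁺u = η⁻u = 0`. -/
theorem degree_zero_rigidity
    {E : Type*} [NormedAddCommGroup E] [InnerProductSpace ℂ E]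
    (F P V κ K : E →ₗ[ℂ] E)
    (hFskew : ∀ u w : E, (inner ℂ w (F u) : ℂ) = -(inner ℂ (F w) u : ℂ))
    (hPskew : ∀ u w : E, (inner ℂ w (P u) : ℂ) = -(inner ℂ (P w) u : ℂ))
    (hVskew : ∀ u w : E, (inner ℂ w (V u) : ℂ) = -(inner ℂ (V w) u : ℂ))
    (hVF : ∀ u : E, V (F u) - F (V u) = P u)
    (hVP : ∀ u : E, V (P u) - P (V u) = -F u + κ (V u))
    (hFP : ∀ u : E, F (P u) - P (F u) = -κ (F u) + K (V u))
    (hVκ : ∀ u : E, V (κ u) = κ (V u))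
    (a : ℝ) (ha : 0 < a)
    (hKreal : ∀ w : E, (inner ℂ w (K w) : ℂ).im = 0)
    (hKub : ∀ w : E, (inner ℂ w (K w) : ℂ).re ≤ -a * ‖w‖ ^ 2)
    (X ηp ηm : E →ₗ[ℂ] E)
    (hX : ∀ u : E, X u = F u - κ (V u))
    (hηp : ∀ u : E, ηp u = (2 : ℂ)⁻¹ • (X u - Complex.I • P u))
    (hηm : ∀ u : E, ηm u = (2 : ℂ)⁻¹ • (X u + Complex.I • P u))
    (u v : E) (huv : F u = v) (hv : V v = 0) :
    v = 0 ∧ V u = 0 ∧ P u = 0 ∧ F u = 0 ∧ ηp u = 0 ∧ ηm u = 0 := by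
  set w := V u with hw
  -- P u = -F w
  have hPu : P u = -F w := by
    have h := hVF u
    rw [huv, hv] at h
    rw [← h]; abel
  -- K w = -F (F w) - P v + κ v
  have hKw : K w = -F (F w) - P v + κ v := by
    have h := hFP u
    rw [huv, hPu, map_neg] at h
    rw [← hw] at h
    have h2 : -κ v + K w = -F (F w) - P v := h.symm
    rw [← h2]; abel
  -- V (P v) = -F v
  have hVPv : V (P v) = -F v := by
    have h := hVP v
    rw [hv, map_zero, map_zero] at h
    simpa using h
  -- T1 : inner w (F (F w)) = -‖F w‖²
  have hT1 : (inner ℂ w (F (F w)) : ℂ) = -((‖F w‖ ^ 2 : ℝ) : ℂ) := by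
    rw [hFskew (F w) w, inner_self_ofReal]
  -- T2 : inner w (P v) = -‖v‖²
  have hT2 : (inner ℂ w (P v) : ℂ) = -((‖v‖ ^ 2 : ℝ) : ℂ) := by
    have h1 : (inner ℂ (P v) w : ℂ) = (inner ℂ (F v) u : ℂ) := by
      rw [hw, hVskew u (P v), hVPv]
      simp [inner_neg_left]
    have h2 : (inner ℂ u (F v) : ℂ) = -((‖v‖ ^ 2 : ℝ) : ℂ) := by
      rw [hFskew v u, huv, inner_self_ofReal]
    have h3 : (inner ℂ (F v) u : ℂ) = -((‖v‖ ^ 2 : ℝ) : ℂ) := by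
      rw [← inner_conj_symm, h2]
      simp
    calc (inner ℂ w (P v) : ℂ) = starRingEnd ℂ (inner ℂ (P v) w) := by
          rw [inner_conj_symm]
      _ = -((‖v‖ ^ 2 : ℝ) : ℂ) := by rw [h1, h3]; simp
  -- T3 : inner w (κ v) = 0
  have hκv : V (κ v) = 0 := by rw [hVκ, hv, map_zero]
  have hT3 : (inner ℂ w (κ v) : ℂ) = 0 := by
    have h1 : (inner ℂ (κ v) w : ℂ) = 0 := by
      rw [hw, hVskew u (κ v), hκv]; simp
    rw [← inner_conj_symm, h1]; simp
  have key : (inner ℂ w (K w) : ℂ) = ((‖F w‖ ^ 2 : ℝ) : ℂ) + ((‖v‖ ^ 2 : ℝ) : ℂ) := by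
    rw [hKw, inner_add_right, inner_sub_right, inner_neg_right, hT1, hT2, hT3]
    ring
  have hre : (inner ℂ w (K w) : ℂ).re = ‖F w‖ ^ 2 + ‖v‖ ^ 2 := by
    rw [key, ← Complex.ofReal_add, Complex.ofReal_re]
  have hub := hKub w
  rw [hre] at hub
  have hw2 : ‖w‖ ^ 2 ≤ 0 := by nlinarith [sq_nonneg ‖F w‖, sq_nonneg ‖v‖]
  have hw0 : w = 0 := by
    have h0 : ‖w‖ ^ 2 = 0 := le_antisymm hw2 (sq_nonneg _)
    have : ‖w‖ = 0 := by
      have := sq_eq_zero_iff.mp h0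
      exact this
    exact norm_eq_zero.mp this
  have hv0 : v = 0 := by
    have h0 : ‖v‖ ^ 2 = 0 := by
      have hnw : ‖w‖ = 0 := by rw [hw0]; simp
      nlinarith [sq_nonneg ‖F w‖, sq_nonneg ‖v‖]
    exact norm_eq_zero.mp (sq_eq_zero_iff.mp h0)
  have hVu : V u = 0 := by rw [← hw]; exact hw0
  have hPu0 : P u = 0 := by rw [hPu, hw0, map_zero, neg_zero]
  have hFu0 : F u = 0 := by rw [huv, hv0]
  have hXu : X u = 0 := by rw [hX, hFu0, hVu, map_zero, sub_zero]
  refine ⟨hv0, hVu, hPu0, hFu0, ?_, ?_⟩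
  · rw [hηp, hXu, hPu0]; simp
  · rw [hηm, hXu, hPu0]; simp
end

section
/- (Weighted summation lemma with general Carleman weights.) Let a > 0 and let (γ_k)_{k≥0} be real numbers satisfying γ_k² ≥ 4γ_{k−2}² for all k ≥ 3 and γ_k² ≥ 8k·γ_{k−1}² for all k ≥ 2. Let (E_k), (U_k), (K_k), (W_k) be nonnegative real sequences indexed by positive integers, all vanishing for k larger than some T, and suppose that for every k ≥ 1: E_k + k a U_k + (k/2) K_k ≤ 2 W_{k+1} + 4 E_{k+2} + 4(k+1)² K_{k+1}. Then for every integer N ≥ 1: a · Σ_{k=N}^∞ γ_k² U_k ≤ 2 · Σ_{k=N+1}^∞ γ_{k−1}² W_k. -/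
private lemma shiftSum (g : ℕ → ℝ) (m n d : ℕ) :
    ∑ k ∈ Finset.Ico m n, g (k + d) = ∑ k ∈ Finset.Ico (m + d) (n + d), g k := by
  rw [Finset.sum_Ico_eq_sum_range, Finset.sum_Ico_eq_sum_range]
  have : n + d - (m + d) = n - m := by omega
  rw [this]
  exact Finset.sum_congr rfl fun k _ => by rw [show m + d + k = m + k + d from by omega]

/-- Weighted summation lemma with general Carleman weights: from the per-mode
inequality `E_k + kaU_k + (k/2)K_k ≤ 2W_{k+1} + 4E_{k+2} + 4(k+1)²K_{k+1}` for
`k ≥ 1` and weights satisfying `γ_k² ≥ 4γ_{k−2}²` (k ≥ 3) and `γ_k² ≥ 8kγ_{k−1}²`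
(k ≥ 2), one gets `a·Σ_{k=N}^∞ γ_k²U_k ≤ 2·Σ_{k=N+1}^∞ γ_{k−1}²W_k` for `N ≥ 1`.
The tails are expressed as `tsum`s over the shift `k = N + j` (resp. `k = N+1+j`),
and all sequences vanish beyond an index `T`, so the sums are finite. -/
theorem carleman_summation_general
    (a : ℝ) (ha : 0 < a) (γ E U K W : ℕ → ℝ)
    (hγ1 : ∀ k : ℕ, 3 ≤ k → 4 * γ (k - 2) ^ 2 ≤ γ k ^ 2)
    (hγ2 : ∀ k : ℕ, 2 ≤ k → 8 * (k : ℝ) * γ (k - 1) ^ 2 ≤ γ k ^ 2)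
    (hE : ∀ k, 0 ≤ E k) (hU : ∀ k, 0 ≤ U k) (hK : ∀ k, 0 ≤ K k) (hW : ∀ k, 0 ≤ W k)
    (T : ℕ)
    (hvanish : ∀ k : ℕ, T < k → E k = 0 ∧ U k = 0 ∧ K k = 0 ∧ W k = 0)
    (hineq : ∀ k : ℕ, 1 ≤ k →
      E k + (k : ℝ) * a * U k + ((k : ℝ) / 2) * K k
        ≤ 2 * W (k + 1) + 4 * E (k + 2) + 4 * ((k : ℝ) + 1) ^ 2 * K (k + 1)) :
    ∀ N : ℕ, 1 ≤ N →
      a * ∑' j : ℕ, γ (N + j) ^ 2 * U (N + j)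
        ≤ 2 * ∑' j : ℕ, γ (N + j) ^ 2 * W (N + 1 + j) := by
  intro N hN
  set B := T + 2 with hB
  set S := Finset.Ico N (B + 1) with hS
  -- convert the tsums to finite sums over Ico N (B+1)
  have h1 : ∑' j : ℕ, γ (N + j) ^ 2 * U (N + j)
      = ∑ k ∈ S, γ k ^ 2 * U k := by
    rw [hS, Finset.sum_Ico_eq_sum_range]
    refine tsum_eq_sum ?_
    intro j hj
    simp only [Finset.mem_range, not_lt] at hj
    have : T < N + j := by omega
    rw [(hvanish _ this).2.1, mul_zero]
  have h2 : ∑' j : ℕ, γ (N + j) ^ 2 * W (N + 1 + j)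
      = ∑ k ∈ S, γ k ^ 2 * W (k + 1) := by
    rw [hS, Finset.sum_Ico_eq_sum_range]
    have : ∀ j : ℕ, N + 1 + j = N + j + 1 := fun j => by omega
    refine tsum_eq_sum ?_ |>.trans (Finset.sum_congr rfl fun j _ => by rw [this])
    intro j hj
    simp only [Finset.mem_range, not_lt] at hj
    have : T < N + 1 + j := by omega
    rw [(hvanish _ this).2.2.2, mul_zero]
  rw [h1, h2]
  -- pointwise weighted inequality, summed
  have step1 : ∑ k ∈ S, (γ k ^ 2 * E k + (k : ℝ) * a * (γ k ^ 2 * U k)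
        + ((k : ℝ) / 2) * (γ k ^ 2 * K k))
      ≤ ∑ k ∈ S, (2 * (γ k ^ 2 * W (k + 1)) + γ (k + 2) ^ 2 * E (k + 2)
        + (((k : ℝ) + 1) / 2) * (γ (k + 1) ^ 2 * K (k + 1))) := by
    refine Finset.sum_le_sum fun k hk => ?_
    have hk1 : 1 ≤ k := by
      rw [hS, Finset.mem_Ico] at hk; omega
    have hmain := hineq k hk1
    have hg1 := hγ1 (k + 2) (by omega)
    have hg2 := hγ2 (k + 1) (by omega)
    simp only [Nat.add_sub_cancel] at hg1 hg2
    push_cast at hg2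
    have hγnn : (0 : ℝ) ≤ γ k ^ 2 := sq_nonneg _
    have h1k : (1 : ℝ) ≤ (k : ℝ) := by exact_mod_cast hk1
    nlinarith [mul_le_mul_of_nonneg_left hmain hγnn,
      mul_le_mul_of_nonneg_right hg1 (hE (k + 2)),
      mul_le_mul_of_nonneg_right hg2 (hK (k + 1)),
      hK (k + 1), hE (k + 2), sq_nonneg (γ k)]
  -- the shifted E-sum is dominated by the unshifted one
  have gE : ∀ k, 0 ≤ γ k ^ 2 * E k := fun k => mul_nonneg (sq_nonneg _) (hE k)
  have stepE : ∑ k ∈ S, γ (k + 2) ^ 2 * E (k + 2) ≤ ∑ k ∈ S, γ k ^ 2 * E k := by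
    rw [hS, shiftSum (fun k => γ k ^ 2 * E k) N (B + 1) 2]
    have hzero : ∀ k ∈ Finset.Ico (N + 2) (B + 1 + 2), k ∉ Finset.Ico (N + 2) (B + 1)
        → γ k ^ 2 * E k = 0 := by
      intro k hk hk'
      simp only [Finset.mem_Ico] at hk hk'
      have : T < k := by omega
      rw [(hvanish _ this).1, mul_zero]
    calc ∑ k ∈ Finset.Ico (N + 2) (B + 1 + 2), γ k ^ 2 * E k
        = ∑ k ∈ Finset.Ico (N + 2) (B + 1), γ k ^ 2 * E k := by
          refine (Finset.sum_subset ?_ hzero).symm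
          intro k hk; simp only [Finset.mem_Ico] at *; omega
      _ ≤ ∑ k ∈ Finset.Ico N (B + 1), γ k ^ 2 * E k := by
          refine Finset.sum_le_sum_of_subset_of_nonneg ?_ fun k _ _ => gE k
          intro k hk; simp only [Finset.mem_Ico] at *; omega
  have stepK : ∑ k ∈ S, (((k : ℝ) + 1) / 2) * (γ (k + 1) ^ 2 * K (k + 1))
      ≤ ∑ k ∈ S, ((k : ℝ) / 2) * (γ k ^ 2 * K k) := by
    have hrw : ∀ k : ℕ, (((k : ℝ) + 1) / 2) * (γ (k + 1) ^ 2 * K (k + 1))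
        = (fun m : ℕ => ((m : ℝ) / 2) * (γ m ^ 2 * K m)) (k + 1) := by
      intro k; push_cast; ring
    rw [hS]
    calc ∑ k ∈ Finset.Ico N (B + 1), (((k : ℝ) + 1) / 2) * (γ (k + 1) ^ 2 * K (k + 1))
        = ∑ k ∈ Finset.Ico (N + 1) (B + 1 + 1), ((k : ℝ) / 2) * (γ k ^ 2 * K k) := by
          rw [← shiftSum (fun m : ℕ => ((m : ℝ) / 2) * (γ m ^ 2 * K m)) N (B + 1) 1]
          exact Finset.sum_congr rfl fun k _ => by push_cast; ring
      _ = ∑ k ∈ Finset.Ico (N + 1) (B + 1), ((k : ℝ) / 2) * (γ k ^ 2 * K k) := by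
          refine (Finset.sum_subset ?_ ?_).symm
          · intro k hk; simp only [Finset.mem_Ico] at *; omega
          · intro k hk hk'
            simp only [Finset.mem_Ico] at hk hk'
            have : T < k := by omega
            rw [(hvanish _ this).2.2.1, mul_zero, mul_zero]
      _ ≤ ∑ k ∈ Finset.Ico N (B + 1), ((k : ℝ) / 2) * (γ k ^ 2 * K k) := by
          refine Finset.sum_le_sum_of_subset_of_nonneg ?_ fun k hk _ => ?_
          · intro k hk; simp only [Finset.mem_Ico] at *; omega
          · exact mul_nonneg (by positivity) (mul_nonneg (sq_nonneg _) (hK k))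
  -- combine
  have hsplitL : ∑ k ∈ S, (γ k ^ 2 * E k + (k : ℝ) * a * (γ k ^ 2 * U k)
        + ((k : ℝ) / 2) * (γ k ^ 2 * K k))
      = ∑ k ∈ S, γ k ^ 2 * E k + ∑ k ∈ S, (k : ℝ) * a * (γ k ^ 2 * U k)
        + ∑ k ∈ S, ((k : ℝ) / 2) * (γ k ^ 2 * K k) := by
    rw [Finset.sum_add_distrib, Finset.sum_add_distrib]
  have hsplitR : ∑ k ∈ S, (2 * (γ k ^ 2 * W (k + 1)) + γ (k + 2) ^ 2 * E (k + 2)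
        + (((k : ℝ) + 1) / 2) * (γ (k + 1) ^ 2 * K (k + 1)))
      = 2 * ∑ k ∈ S, γ k ^ 2 * W (k + 1) + ∑ k ∈ S, γ (k + 2) ^ 2 * E (k + 2)
        + ∑ k ∈ S, (((k : ℝ) + 1) / 2) * (γ (k + 1) ^ 2 * K (k + 1)) := by
    rw [Finset.sum_add_distrib, Finset.sum_add_distrib, Finset.mul_sum]
  have hmid : ∑ k ∈ S, (k : ℝ) * a * (γ k ^ 2 * U k)
      ≤ 2 * ∑ k ∈ S, γ k ^ 2 * W (k + 1) := by
    have := step1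
    rw [hsplitL, hsplitR] at this
    linarith
  have hfinal : a * ∑ k ∈ S, γ k ^ 2 * U k
      ≤ ∑ k ∈ S, (k : ℝ) * a * (γ k ^ 2 * U k) := by
    rw [Finset.mul_sum]
    refine Finset.sum_le_sum fun k hk => ?_
    have hk1 : 1 ≤ k := by rw [hS, Finset.mem_Ico] at hk; omega
    have h1k : (1 : ℝ) ≤ (k : ℝ) := by exact_mod_cast hk1
    have hx : 0 ≤ γ k ^ 2 * U k := mul_nonneg (sq_nonneg _) (hU k)
    have : a ≤ (k : ℝ) * a := by nlinarith
    exact mul_le_mul_of_nonneg_right this hx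
  linarith
end

section
/- (Weighted summation lemma with the explicit factorial-exponential weights.) Let a > 0 and σ > 0, and set γ_k² := 8^k · k! · e^{kσ} for integers k ≥ 0. Let (E_k), (U_k), (K_k), (W_k) be nonnegative real sequences indexed by positive integers, all vanishing for k larger than some T, and suppose that for every k ≥ 1: E_k + k a U_k + (k/2) K_k ≤ 2 W_{k+1} + 4 E_{k+2} + 4(k+1)² K_{k+1}. Then for every integer N ≥ 1: Σ_{k=N}^∞ γ_k² U_k ≤ (2/(a e^σ)) · Σ_{k=N+1}^∞ γ_k² W_k. -/
open Finset

namespace CarlemanAux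

noncomputable def g (σ : ℝ) (k : ℕ) : ℝ :=
  (8 : ℝ) ^ k * (k.factorial : ℝ) * Real.exp ((k : ℝ) * σ)

lemma g_pos (σ : ℝ) (k : ℕ) : 0 < g σ k := by
  unfold g; positivity

lemma g_succ (σ : ℝ) (k : ℕ) :
    g σ (k + 1) = 8 * ((k : ℝ) + 1) * Real.exp σ * g σ k := by
  unfold g
  rw [pow_succ, Nat.factorial_succ]
  push_cast
  rw [show ((k : ℝ) + 1) * σ = (k : ℝ) * σ + σ by ring, Real.exp_add]
  ring

end CarlemanAux

set_option maxHeartbeats 1600000 in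
/-- Weighted summation lemma with the explicit factorial-exponential weights
`γ_k² = 8^k·k!·e^{kσ}`: from the per-mode inequality
`E_k + kaU_k + (k/2)K_k ≤ 2W_{k+1} + 4E_{k+2} + 4(k+1)²K_{k+1}` for `k ≥ 1`, one
gets `Σ_{k=N}^∞ γ_k²U_k ≤ (2/(ae^σ))·Σ_{k=N+1}^∞ γ_k²W_k` for every `N ≥ 1`.
The tails are expressed as `tsum`s over the shift `k = N + j` (resp. `k = N+1+j`),
and all sequences vanish beyond an index `T`, so the sums are finite. -/
theorem carleman_summation_explicit
    (a σ : ℝ) (ha : 0 < a) (hσ : 0 < σ) (E U K W : ℕ → ℝ)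
    (hE : ∀ k, 0 ≤ E k) (hU : ∀ k, 0 ≤ U k) (hK : ∀ k, 0 ≤ K k) (hW : ∀ k, 0 ≤ W k)
    (T : ℕ)
    (hvanish : ∀ k : ℕ, T < k → E k = 0 ∧ U k = 0 ∧ K k = 0 ∧ W k = 0)
    (hineq : ∀ k : ℕ, 1 ≤ k →
      E k + (k : ℝ) * a * U k + ((k : ℝ) / 2) * K k
        ≤ 2 * W (k + 1) + 4 * E (k + 2) + 4 * ((k : ℝ) + 1) ^ 2 * K (k + 1)) :
    ∀ N : ℕ, 1 ≤ N →
      (∑' j : ℕ, ((8 : ℝ) ^ (N + j) * ((N + j).factorial : ℝ)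
          * Real.exp (((N + j : ℕ) : ℝ) * σ)) * U (N + j))
        ≤ (2 / (a * Real.exp σ)) *
          ∑' j : ℕ, ((8 : ℝ) ^ (N + 1 + j) * ((N + 1 + j).factorial : ℝ)
            * Real.exp (((N + 1 + j : ℕ) : ℝ) * σ)) * W (N + 1 + j) := by
  intro N hN
  set g : ℕ → ℝ := CarlemanAux.g σ with hgdef
  have hgpos : ∀ k, 0 < g k := CarlemanAux.g_pos σ
  have hgsucc : ∀ k, g (k + 1) = 8 * ((k : ℝ) + 1) * Real.exp σ * g k :=
    CarlemanAux.g_succ σ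
  have hone : (1 : ℝ) ≤ Real.exp σ := Real.one_le_exp hσ.le
  have hexp : (0 : ℝ) < Real.exp σ := Real.exp_pos σ
  set L := T + 1 with hL
  -- convert tsums to finite sums
  have hLHS : (∑' j : ℕ, ((8 : ℝ) ^ (N + j) * ((N + j).factorial : ℝ)
      * Real.exp (((N + j : ℕ) : ℝ) * σ)) * U (N + j))
      = ∑ j ∈ range L, g (N + j) * U (N + j) := by
    rw [tsum_eq_sum (s := range L)]
    · rfl
    · intro j hj
      have hU0 : U (N + j) = 0 := (hvanish (N + j) (by simp [hL] at hj ⊢; omega)).2.1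
      simp [hU0]
  have hRHS : (∑' j : ℕ, ((8 : ℝ) ^ (N + 1 + j) * ((N + 1 + j).factorial : ℝ)
      * Real.exp (((N + 1 + j : ℕ) : ℝ) * σ)) * W (N + 1 + j))
      = ∑ j ∈ range L, g (N + j + 1) * W (N + j + 1) := by
    rw [tsum_eq_sum (s := range L)]
    · refine Finset.sum_congr rfl fun j _ => ?_
      have : N + 1 + j = N + j + 1 := by omega
      rw [this]; rfl
    · intro j hj
      have hW0 : W (N + 1 + j) = 0 := (hvanish (N + 1 + j) (by simp [hL] at hj ⊢; omega)).2.2.2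
      simp [hW0]
  rw [hLHS, hRHS]
  -- names for the finite sums
  set SW := ∑ j ∈ range L, g (N + j + 1) * W (N + j + 1) with hSW
  set SE := ∑ j ∈ range L, g (N + j) * E (N + j) with hSE
  set SK := ∑ j ∈ range L, (((N + j : ℕ) : ℝ) / 2) * (g (N + j) * K (N + j)) with hSK
  set SU := ∑ j ∈ range L, g (N + j) * U (N + j) with hSU
  set SkU := ∑ j ∈ range L, ((N + j : ℕ) : ℝ) * a * (g (N + j) * U (N + j)) with hSkU
  have hSWnn : 0 ≤ SW :=
    Finset.sum_nonneg fun j _ => mul_nonneg (hgpos _).le (hW _)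
  -- Step 1: multiply the per-mode inequality by g (N+j) and sum
  have h1 : SE + SkU + SK ≤
      ∑ j ∈ range L, (g (N + j) * (2 * W (N + j + 1)) + g (N + j) * (4 * E (N + j + 2))
        + g (N + j) * (4 * (((N + j : ℕ) : ℝ) + 1) ^ 2 * K (N + j + 1))) := by
    rw [hSE, hSkU, hSK, ← Finset.sum_add_distrib, ← Finset.sum_add_distrib]
    refine Finset.sum_le_sum fun j _ => ?_
    have hk : 1 ≤ N + j := by omega
    have h := hineq (N + j) hk
    have h2 := mul_le_mul_of_nonneg_left h (hgpos (N + j)).le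
    push_cast at h2 ⊢
    nlinarith [hgpos (N + j)]
  -- Step 2a: bound the W-sum
  have hWb : ∑ j ∈ range L, g (N + j) * (2 * W (N + j + 1)) ≤ (2 / Real.exp σ) * SW := by
    rw [hSW, Finset.mul_sum]
    refine Finset.sum_le_sum fun j _ => ?_
    have hg1 := hgsucc (N + j)
    have hWnn := hW (N + j + 1)
    have hgp := hgpos (N + j)
    have key : 2 * g (N + j) ≤ (2 / Real.exp σ) * g (N + j + 1) := by
      rw [hg1, div_mul_eq_mul_div, le_div_iff₀ hexp]
      have hk0 : (0 : ℝ) ≤ ((N + j : ℕ) : ℝ) := Nat.cast_nonneg _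
      nlinarith [mul_pos hexp hgp, mul_nonneg hk0 (mul_pos hexp hgp).le]
    nlinarith
  -- Step 2b: bound the E-sum
  have hEb : ∑ j ∈ range L, g (N + j) * (4 * E (N + j + 2)) ≤ SE := by
    have step1 : ∑ j ∈ range L, g (N + j) * (4 * E (N + j + 2))
        ≤ ∑ j ∈ range L, g (N + j + 2) * E (N + j + 2) := by
      refine Finset.sum_le_sum fun j _ => ?_
      have hg1 := hgsucc (N + j)
      have hg2 := hgsucc (N + j + 1)
      have hEnn := hE (N + j + 2)
      have hgp := hgpos (N + j)
      have hmono : g (N + j) ≤ g (N + j + 1) := by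
        rw [hg1]
        have hc : (1 : ℝ) ≤ 8 * (((N + j : ℕ) : ℝ) + 1) * Real.exp σ := by
          have hk0 : (0 : ℝ) ≤ ((N + j : ℕ) : ℝ) := Nat.cast_nonneg _
          nlinarith
        nlinarith [mul_nonneg (sub_nonneg.mpr hc) hgp.le]
      have hquad : 4 * g (N + j + 1) ≤ g (N + j + 2) := by
        rw [hg2]
        have hc : (4 : ℝ) ≤ 8 * (((N + j + 1 : ℕ) : ℝ) + 1) * Real.exp σ := by
          have hk0 : (0 : ℝ) ≤ ((N + j + 1 : ℕ) : ℝ) := Nat.cast_nonneg _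
          nlinarith
        nlinarith [mul_nonneg (sub_nonneg.mpr hc) (hgpos (N + j + 1)).le]
      have key : 4 * g (N + j) ≤ g (N + j + 2) := by linarith
      nlinarith
    have step2 : ∑ j ∈ range L, g (N + j + 2) * E (N + j + 2)
        = ∑ i ∈ Finset.Ico 2 (L + 2), g (N + i) * E (N + i) := by
      rw [Finset.sum_Ico_eq_sum_range]
      refine Finset.sum_congr (by congr 1) fun j _ => ?_
      rw [show N + (2 + j) = N + j + 2 by omega]
    have step3 : ∑ i ∈ Finset.Ico 2 (L + 2), g (N + i) * E (N + i)
        ≤ ∑ i ∈ range (L + 2), g (N + i) * E (N + i) := by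
      refine Finset.sum_le_sum_of_subset_of_nonneg ?_ fun i _ _ =>
        mul_nonneg (hgpos _).le (hE _)
      intro i hi
      simp only [Finset.mem_Ico, Finset.mem_range] at hi ⊢
      omega
    have step4 : ∑ i ∈ range (L + 2), g (N + i) * E (N + i) = SE := by
      rw [Finset.sum_range_succ, Finset.sum_range_succ]
      have hz1 : E (N + L) = 0 := (hvanish _ (by simp only [hL]; omega)).1
      have hz2 : E (N + (L + 1)) = 0 := (hvanish _ (by simp only [hL]; omega)).1
      rw [hz1, hz2, hSE]; ring
    linarith
  -- Step 2c: bound the K-sum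
  have hKb : ∑ j ∈ range L, g (N + j) * (4 * (((N + j : ℕ) : ℝ) + 1) ^ 2 * K (N + j + 1))
      ≤ SK := by
    have step1 : ∑ j ∈ range L, g (N + j) * (4 * (((N + j : ℕ) : ℝ) + 1) ^ 2 * K (N + j + 1))
        ≤ ∑ j ∈ range L, (((N + j + 1 : ℕ) : ℝ) / 2) * (g (N + j + 1) * K (N + j + 1)) := by
      refine Finset.sum_le_sum fun j _ => ?_
      have hg1 := hgsucc (N + j)
      have hKnn := hK (N + j + 1)
      have hgp := hgpos (N + j)
      have key : g (N + j) * (4 * (((N + j : ℕ) : ℝ) + 1) ^ 2)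
          ≤ (((N + j + 1 : ℕ) : ℝ) / 2) * g (N + j + 1) := by
        rw [hg1]
        push_cast
        nlinarith [mul_nonneg (mul_nonneg (sq_nonneg ((N : ℝ) + (j : ℝ) + 1)) hgp.le)
          (sub_nonneg.mpr hone)]
      nlinarith
    have step2 : ∑ j ∈ range L, (((N + j + 1 : ℕ) : ℝ) / 2) * (g (N + j + 1) * K (N + j + 1))
        = ∑ i ∈ Finset.Ico 1 (L + 1), (((N + i : ℕ) : ℝ) / 2) * (g (N + i) * K (N + i)) := by
      rw [Finset.sum_Ico_eq_sum_range]
      refine Finset.sum_congr (by congr 1) fun j _ => ?_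
      rw [show N + (1 + j) = N + j + 1 by omega]
    have step3 : ∑ i ∈ Finset.Ico 1 (L + 1), (((N + i : ℕ) : ℝ) / 2) * (g (N + i) * K (N + i))
        ≤ ∑ i ∈ range (L + 1), (((N + i : ℕ) : ℝ) / 2) * (g (N + i) * K (N + i)) := by
      refine Finset.sum_le_sum_of_subset_of_nonneg ?_ fun i _ _ =>
        mul_nonneg (by positivity) (mul_nonneg (hgpos _).le (hK _))
      intro i hi
      simp only [Finset.mem_Ico, Finset.mem_range] at hi ⊢
      omega
    have step4 : ∑ i ∈ range (L + 1), (((N + i : ℕ) : ℝ) / 2) * (g (N + i) * K (N + i))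
        = SK := by
      rw [Finset.sum_range_succ]
      have hz : K (N + L) = 0 := (hvanish _ (by simp only [hL]; omega)).2.2.1
      rw [hz, hSK]; ring
    linarith
  -- combine
  have hSplit : ∑ j ∈ range L, (g (N + j) * (2 * W (N + j + 1)) + g (N + j) * (4 * E (N + j + 2))
        + g (N + j) * (4 * (((N + j : ℕ) : ℝ) + 1) ^ 2 * K (N + j + 1)))
      = (∑ j ∈ range L, g (N + j) * (2 * W (N + j + 1)))
        + (∑ j ∈ range L, g (N + j) * (4 * E (N + j + 2)))
        + ∑ j ∈ range L, g (N + j) * (4 * (((N + j : ℕ) : ℝ) + 1) ^ 2 * K (N + j + 1)) := by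
    rw [Finset.sum_add_distrib, Finset.sum_add_distrib]
  have hmain : SkU ≤ (2 / Real.exp σ) * SW := by
    rw [hSplit] at h1
    linarith
  have haSU : a * SU ≤ SkU := by
    rw [hSU, hSkU, Finset.mul_sum]
    refine Finset.sum_le_sum fun j _ => ?_
    have h1j : (1 : ℝ) ≤ ((N + j : ℕ) : ℝ) := by
      have h : 1 ≤ N + j := by omega
      exact_mod_cast h
    have hgU := mul_nonneg (hgpos (N + j)).le (hU (N + j))
    nlinarith [mul_nonneg (mul_nonneg (sub_nonneg.mpr h1j) ha.le) hgU]
  have hfin : a * SU ≤ (2 / Real.exp σ) * SW := le_trans haSU hmain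
  have hpos : 0 < a * Real.exp σ := mul_pos ha hexp
  rw [div_mul_eq_mul_div, le_div_iff₀ hpos]
  calc SU * (a * Real.exp σ) = (a * SU) * Real.exp σ := by ring
    _ ≤ ((2 / Real.exp σ) * SW) * Real.exp σ :=
        mul_le_mul_of_nonneg_right hfin hexp.le
    _ = 2 * SW := by field_simp
end

section
/- (Abstract magnetic Carleman estimate, Theorem 3.1.) Assume a, b > 0 and that for every w ∈ E the number ⟪K̂w, w⟫ is real and satisfies −2b‖w‖² ≤ ⟪K̂w, w⟫ ≤ −2a‖w‖². Let (u_k)_{k∈ℤ} be a finitely supported family in E with V u_k = i k u_k for every k ∈ ℤ, and for each k ∈ ℤ set w_k := η⁺u_{k−1} + η⁻u_{k+1} + i k κ̂ u_k (the k-th Fourier mode of F(Σ_j u_j)). Then for every σ > 0 and every integer N ≥ 1, setting γ_k² := 8^{|k|} · |k|! · e^{|k|σ}, one has Σ_{|k| ≥ N} γ_k² ‖u_k‖² ≤ (2/(a e^σ)) · Σ_{|k| ≥ N+1} γ_k² ‖w_k‖². -/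
private noncomputable def cwN (σ : ℝ) (n : ℕ) : ℝ :=
  (8 : ℝ) ^ n * (n.factorial : ℝ) * Real.exp ((n : ℝ) * σ)

private lemma cwN_pos (σ : ℝ) (n : ℕ) : 0 < cwN σ n := by
  have h : (0:ℝ) < n.factorial := by exact_mod_cast n.factorial_pos
  unfold cwN; positivity

private lemma cwN_succ (σ : ℝ) (n : ℕ) :
    cwN σ (n+1) = 8 * ((n:ℝ)+1) * Real.exp σ * cwN σ n := by
  unfold cwN
  rw [pow_succ, Nat.factorial_succ]
  push_cast
  rw [show ((n:ℝ)+1) * σ = (n:ℝ) * σ + σ by ring, Real.exp_add]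
  ring

private lemma cwN_le_succ (σ : ℝ) (hσ : 0 < σ) (n : ℕ) :
    8 * cwN σ n ≤ cwN σ (n+1) := by
  rw [cwN_succ]
  have h1 : (1:ℝ) ≤ Real.exp σ := Real.one_le_exp hσ.le
  have h2 : (0:ℝ) ≤ (n:ℝ) := Nat.cast_nonneg n
  have h3 := cwN_pos σ n
  nlinarith [mul_le_mul_of_nonneg_left h1 (by positivity : (0:ℝ) ≤ 8*((n:ℝ)+1)*cwN σ n)]

set_option maxHeartbeats 1000000 in
private lemma sum_machine (a σ : ℝ) (ha : 0 < a) (hσ : 0 < σ) (N : ℤ) (hN : 1 ≤ N)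
    (n m p c W : ℤ → ℝ)
    (hn : ∀ k, 0 ≤ n k) (hm : ∀ k, 0 ≤ m k) (hp : ∀ k, 0 ≤ p k)
    (hc : ∀ k, 0 ≤ c k) (hW : ∀ k, 0 ≤ W k)
    (s : Finset ℤ)
    (hsupp : ∀ k ∉ s, n k = 0 ∧ m k = 0 ∧ p k = 0 ∧ c k = 0 ∧ W k = 0)
    (keyP : ∀ k : ℤ, 1 ≤ k →
      m k ^ 2 + a * (k:ℝ) * n k ^ 2 + (k:ℝ) / 2 * c k ^ 2 ≤ p k ^ 2)
    (keyM : ∀ k : ℤ, k ≤ -1 →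
      p k ^ 2 + a * (-(k:ℝ)) * n k ^ 2 + (-(k:ℝ)) / 2 * c k ^ 2 ≤ m k ^ 2)
    (triP : ∀ k : ℤ, 0 ≤ k → p k ≤ W (k+1) + m (k+2) + ((k:ℝ)+1) * c (k+1))
    (triM : ∀ k : ℤ, k ≤ 0 → m k ≤ W (k-1) + p (k-2) + (1-(k:ℝ)) * c (k-1)) :
    (∑' k : ℤ, if N ≤ |k| then
        ((8 : ℝ) ^ k.natAbs * (k.natAbs.factorial : ℝ)
          * Real.exp ((k.natAbs : ℝ) * σ)) * n k ^ 2
      else 0)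
      ≤ (2 / (a * Real.exp σ)) *
        ∑' k : ℤ, if N + 1 ≤ |k| then
          ((8 : ℝ) ^ k.natAbs * (k.natAbs.factorial : ℝ)
            * Real.exp ((k.natAbs : ℝ) * σ)) * W k ^ 2
        else 0 := by
  obtain ⟨g, hg⟩ : ∃ x : ℤ → ℝ, x = fun k => cwN σ k.natAbs := ⟨_, rfl⟩
  obtain ⟨i1, hi1⟩ : ∃ x : ℤ → ℤ, x = fun k => if 0 ≤ k then k+1 else k-1 := ⟨_, rfl⟩
  obtain ⟨i2, hi2⟩ : ∃ x : ℤ → ℤ, x = fun k => if 0 ≤ k then k+2 else k-2 := ⟨_, rfl⟩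
  obtain ⟨mp, hmp⟩ : ∃ x : ℤ → ℝ, x = fun k => if 0 ≤ k then m k else p k := ⟨_, rfl⟩
  obtain ⟨A, hA⟩ : ∃ x : ℤ → ℝ, x = fun k => if N ≤ |k| then g k * (a * (|k|:ℝ) * n k^2) else 0 := ⟨_, rfl⟩
  obtain ⟨Bm, hBm⟩ : ∃ x : ℤ → ℝ, x = fun k => if N ≤ |k| then g k * mp k^2 else 0 := ⟨_, rfl⟩
  obtain ⟨Bc, hBc⟩ : ∃ x : ℤ → ℝ, x = fun k => if N ≤ |k| then g k * ((|k|:ℝ)/2 * c k^2) else 0 := ⟨_, rfl⟩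
  obtain ⟨RW, hRW⟩ : ∃ x : ℤ → ℝ, x = fun k => if N ≤ |k| then g k * (4 * W (i1 k)^2) else 0 := ⟨_, rfl⟩
  obtain ⟨Rm, hRm⟩ : ∃ x : ℤ → ℝ, x = fun k => if N ≤ |k| then g k * (2 * mp (i2 k)^2) else 0 := ⟨_, rfl⟩
  obtain ⟨Rc, hRc⟩ : ∃ x : ℤ → ℝ, x = fun k =>
    if N ≤ |k| then g k * (4 * ((|k|:ℝ)+1)^2 * c (i1 k)^2) else 0 := ⟨_, rfl⟩
  obtain ⟨Rt, hRt⟩ : ∃ x : ℤ → ℝ, x = fun k => if N+1 ≤ |k| then g k * W k^2 else 0 := ⟨_, rfl⟩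
  obtain ⟨Lf, hLf⟩ : ∃ x : ℤ → ℝ, x = fun k => if N ≤ |k| then g k * n k^2 else 0 := ⟨_, rfl⟩
  have hg0 : ∀ k : ℤ, 0 < g k := by
    intro k; simp only [hg]; exact cwN_pos σ _
  have hE1 : (1:ℝ) ≤ Real.exp σ := Real.one_le_exp hσ.le
  have hE0 : (0:ℝ) < Real.exp σ := Real.exp_pos σ
  have hi1abs : ∀ k : ℤ, (i1 k).natAbs = k.natAbs + 1 := by
    intro k; simp only [hi1]; split_ifs <;> omega
  have hi2abs : ∀ k : ℤ, (i2 k).natAbs = k.natAbs + 2 := by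
    intro k; simp only [hi2]; split_ifs <;> omega
  have habsR : ∀ k : ℤ, |(k:ℝ)| = (k.natAbs:ℝ) := by
    intro k; simp [Nat.cast_natAbs]
  have habs_i1 : ∀ k : ℤ, |i1 k| = |k| + 1 := by
    intro k
    rw [Int.abs_eq_natAbs, Int.abs_eq_natAbs, hi1abs k]; push_cast; ring
  have habs_i2 : ∀ k : ℤ, |i2 k| = |k| + 2 := by
    intro k
    rw [Int.abs_eq_natAbs, Int.abs_eq_natAbs, hi2abs k]; push_cast; ring
  have hg1' : ∀ k : ℤ, g (i1 k) = 8 * ((k.natAbs:ℝ)+1) * Real.exp σ * g k := by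
    intro k; simp only [hg]; rw [hi1abs k, cwN_succ]
  have hg2 : ∀ k : ℤ, 2 * g k ≤ g (i2 k) := by
    intro k
    have h1 := cwN_le_succ σ hσ k.natAbs
    have h2 := cwN_le_succ σ hσ (k.natAbs+1)
    have h3 := cwN_pos σ k.natAbs
    simp only [hg]; rw [hi2abs k]
    have h4 := cwN_pos σ (k.natAbs + 1)
    calc 2 * cwN σ k.natAbs ≤ cwN σ (k.natAbs+1) := by linarith
    _ ≤ cwN σ (k.natAbs+2) := by
        have := cwN_le_succ σ hσ (k.natAbs+1); linarith
  have hinj1 : Function.Injective i1 := by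
    intro x y h; simp only [hi1] at h; split_ifs at h <;> omega
  have hinj2 : Function.Injective i2 := by
    intro x y h; simp only [hi2] at h; split_ifs at h <;> omega
  -- support
  obtain ⟨t, ht2⟩ : ∃ x : Finset ℤ, x = s.biUnion (fun j => Finset.Icc (j-2) (j+2)) := ⟨_, rfl⟩
  have hts : ∀ k : ℤ, k ∉ t → ∀ d : ℤ, -2 ≤ d → d ≤ 2 →
      n (k+d) = 0 ∧ m (k+d) = 0 ∧ p (k+d) = 0 ∧ c (k+d) = 0 ∧ W (k+d) = 0 := by
    intro k hk d h1 h2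
    refine hsupp _ (fun hmem => hk ?_)
    rw [ht2]
    exact Finset.mem_biUnion.mpr ⟨k+d, hmem, Finset.mem_Icc.mpr ⟨by omega, by omega⟩⟩
  have h0n : ∀ k ∉ t, n k = 0 := by
    intro k hk; simpa using (hts k hk 0 (by norm_num) (by norm_num)).1
  have h0mp : ∀ k ∉ t, mp k = 0 := by
    intro k hk
    have h := hts k hk 0 (by norm_num) (by norm_num)
    simp only [add_zero] at h
    simp only [hmp]; split_ifs
    · exact h.2.1
    · exact h.2.2.1
  have h0c : ∀ k ∉ t, c k = 0 := by
    intro k hk; simpa using (hts k hk 0 (by norm_num) (by norm_num)).2.2.2.1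
  have h0W : ∀ k ∉ t, W k = 0 := by
    intro k hk; simpa using (hts k hk 0 (by norm_num) (by norm_num)).2.2.2.2
  have h0Wi1 : ∀ k ∉ t, W (i1 k) = 0 := by
    intro k hk
    simp only [hi1]; split_ifs
    · simpa using (hts k hk 1 (by norm_num) (by norm_num)).2.2.2.2
    · simpa [← sub_eq_add_neg] using (hts k hk (-1) (by norm_num) (by norm_num)).2.2.2.2
  have h0ci1 : ∀ k ∉ t, c (i1 k) = 0 := by
    intro k hk
    simp only [hi1]; split_ifs
    · simpa using (hts k hk 1 (by norm_num) (by norm_num)).2.2.2.1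
    · simpa [← sub_eq_add_neg] using (hts k hk (-1) (by norm_num) (by norm_num)).2.2.2.1
  have h0mpi2 : ∀ k ∉ t, mp (i2 k) = 0 := by
    intro k hk
    simp only [hi2, hmp]; split_ifs
    · simpa using (hts k hk 2 (by norm_num) (by norm_num)).2.1
    · simpa using (hts k hk 2 (by norm_num) (by norm_num)).2.2.1
    · simpa [← sub_eq_add_neg] using (hts k hk (-2) (by norm_num) (by norm_num)).2.1
    · simpa [← sub_eq_add_neg] using (hts k hk (-2) (by norm_num) (by norm_num)).2.2.1
  -- vanishing of each cut function off t, then summability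
  have hA0 : ∀ k ∉ t, A k = 0 := by
    intro k hk; simp only [hA]; split_ifs with h
    · rw [h0n k hk]; ring
    · rfl
  have hBm0 : ∀ k ∉ t, Bm k = 0 := by
    intro k hk; simp only [hBm]; split_ifs with h
    · rw [h0mp k hk]; ring
    · rfl
  have hBc0 : ∀ k ∉ t, Bc k = 0 := by
    intro k hk; simp only [hBc]; split_ifs with h
    · rw [h0c k hk]; ring
    · rfl
  have hRW0 : ∀ k ∉ t, RW k = 0 := by
    intro k hk; simp only [hRW]; split_ifs with h
    · rw [h0Wi1 k hk]; ring
    · rfl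
  have hRm0 : ∀ k ∉ t, Rm k = 0 := by
    intro k hk; simp only [hRm]; split_ifs with h
    · rw [h0mpi2 k hk]; ring
    · rfl
  have hRc0 : ∀ k ∉ t, Rc k = 0 := by
    intro k hk; simp only [hRc]; split_ifs with h
    · rw [h0ci1 k hk]; ring
    · rfl
  have hRt0 : ∀ k ∉ t, Rt k = 0 := by
    intro k hk; simp only [hRt]; split_ifs with h
    · rw [h0W k hk]; ring
    · rfl
  have hLf0 : ∀ k ∉ t, Lf k = 0 := by
    intro k hk; simp only [hLf]; split_ifs with h
    · rw [h0n k hk]; ring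
    · rfl
  have sA : Summable A := summable_of_ne_finset_zero hA0
  have sBm : Summable Bm := summable_of_ne_finset_zero hBm0
  have sBc : Summable Bc := summable_of_ne_finset_zero hBc0
  have sRW : Summable RW := summable_of_ne_finset_zero hRW0
  have sRm : Summable Rm := summable_of_ne_finset_zero hRm0
  have sRc : Summable Rc := summable_of_ne_finset_zero hRc0
  have sRt : Summable Rt := summable_of_ne_finset_zero hRt0
  have sLf : Summable Lf := summable_of_ne_finset_zero hLf0
  -- nonnegativity
  have habs0 : ∀ k : ℤ, (0:ℝ) ≤ |(k:ℝ)| := by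
    intro k; positivity
  have hmp0 : ∀ k, 0 ≤ mp k := by
    intro k; simp only [hmp]; split_ifs; exacts [hm k, hp k]
  have hApos : ∀ k, 0 ≤ A k := by
    intro k; simp only [hA]; split_ifs with h
    · exact mul_nonneg (hg0 k).le
        (mul_nonneg (mul_nonneg ha.le (habs0 k)) (sq_nonneg _))
    · exact le_rfl

  have hBmpos : ∀ k, 0 ≤ Bm k := by
    intro k; simp only [hBm]; split_ifs
    · exact mul_nonneg (hg0 k).le (sq_nonneg _)
    · exact le_rfl
  have hBcpos : ∀ k, 0 ≤ Bc k := by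
    intro k; simp only [hBc]; split_ifs
    · exact mul_nonneg (hg0 k).le
        (mul_nonneg (by positivity) (sq_nonneg _))
    · exact le_rfl
  have hRtpos : ∀ k, 0 ≤ Rt k := by
    intro k; simp only [hRt]; split_ifs
    · exact mul_nonneg (hg0 k).le (sq_nonneg _)
    · exact le_rfl
  -- the key termwise inequality
  have T1 : ∀ k, A k + (Bm k + Bc k) ≤ RW k + (Rm k + Rc k) := by
    intro k
    by_cases hk : N ≤ |k|
    · simp only [hA, hBm, hBc, hRW, hRm, hRc, if_pos hk]
      rcases le_or_gt 0 k with h0 | h0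
      · have hk1 : 1 ≤ k := by rw [abs_of_nonneg h0] at hk; omega
        have e1 : i1 k = k + 1 := by simp [hi1, h0]
        have e2 : i2 k = k + 2 := by simp [hi2, h0]
        have em : mp k = m k := by simp [hmp, h0]
        have em2 : mp (k+2) = m (k+2) := by
          simp [hmp, show (0:ℤ) ≤ k+2 by omega]
        rw [e1, e2, em, em2, abs_of_nonneg (by exact_mod_cast h0 : (0:ℝ) ≤ (k:ℝ))]
        have hky := keyP k hk1
        have htr := triP k h0
        have hsq : p k^2 ≤ (W (k+1) + m (k+2) + ((k:ℝ)+1) * c (k+1))^2 :=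
          pow_le_pow_left₀ (hp k) htr 2
        have hexp : (W (k+1) + m (k+2) + ((k:ℝ)+1) * c (k+1))^2
            ≤ 4*W (k+1)^2 + 2*m (k+2)^2 + 4*((k:ℝ)+1)^2*c (k+1)^2 := by
          nlinarith [sq_nonneg (2*W (k+1) - m (k+2)),
            sq_nonneg (W (k+1) - ((k:ℝ)+1)*c (k+1)),
            sq_nonneg (m (k+2) - 2*((k:ℝ)+1)*c (k+1))]
        have hfin : a*(k:ℝ)*n k^2 + (m k^2 + (k:ℝ)/2 * c k^2)
            ≤ 4*W (k+1)^2 + (2*m (k+2)^2 + 4*((k:ℝ)+1)^2*c (k+1)^2) := by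
          linarith [hky, hsq, hexp]
        linarith [mul_le_mul_of_nonneg_left hfin (hg0 k).le]
      · have hk1 : k ≤ -1 := by omega
        have hn0 : ¬ (0:ℤ) ≤ k := not_le.mpr h0
        have e1 : i1 k = k - 1 := by simp [hi1, hn0]
        have e2 : i2 k = k - 2 := by simp [hi2, hn0]
        have em : mp k = p k := by simp [hmp, hn0]
        have em2 : mp (k-2) = p (k-2) := by
          simp [hmp, show ¬ (0:ℤ) ≤ k-2 by omega, show ¬ (2:ℤ) ≤ k by omega]
        rw [e1, e2, em, em2, abs_of_neg (by exact_mod_cast h0 : (k:ℝ) < 0)]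
        have hky := keyM k hk1
        have htr := triM k (by omega : k ≤ 0)
        have hsq : m k^2 ≤ (W (k-1) + p (k-2) + (1-(k:ℝ)) * c (k-1))^2 :=
          pow_le_pow_left₀ (hm k) htr 2
        have hexp : (W (k-1) + p (k-2) + (1-(k:ℝ)) * c (k-1))^2
            ≤ 4*W (k-1)^2 + 2*p (k-2)^2 + 4*(1-(k:ℝ))^2*c (k-1)^2 := by
          nlinarith [sq_nonneg (2*W (k-1) - p (k-2)),
            sq_nonneg (W (k-1) - (1-(k:ℝ))*c (k-1)),
            sq_nonneg (p (k-2) - 2*(1-(k:ℝ))*c (k-1))]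
        have hfin : a*(-(k:ℝ))*n k^2 + (p k^2 + (-(k:ℝ))/2 * c k^2)
            ≤ 4*W (k-1)^2 + (2*p (k-2)^2 + 4*(-(k:ℝ)+1)^2*c (k-1)^2) := by
          linarith [hky, hsq, hexp]
        linarith [mul_le_mul_of_nonneg_left hfin (hg0 k).le]
    · simp only [hA, hBm, hBc, hRW, hRm, hRc, if_neg hk]; norm_num
  have S1 : (∑' k, A k) + ((∑' k, Bm k) + (∑' k, Bc k))
      ≤ (∑' k, RW k) + ((∑' k, Rm k) + (∑' k, Rc k)) := by
    rw [← Summable.tsum_add sBm sBc, ← Summable.tsum_add sA (sBm.add sBc),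
      ← Summable.tsum_add sRm sRc, ← Summable.tsum_add sRW (sRm.add sRc)]
    exact Summable.tsum_le_tsum T1 (sA.add (sBm.add sBc)) (sRW.add (sRm.add sRc))
  -- absorb the Rm term
  have S3 : (∑' k, Rm k) ≤ ∑' k, Bm k := by
    apply Summable.tsum_le_tsum_of_inj i2 hinj2 (fun j _ => hBmpos j) _ sRm sBm
    intro k
    by_cases hk : N ≤ |k|
    · have hcond : N ≤ |i2 k| := by rw [habs_i2]; omega
      simp only [hRm, hBm, if_pos hk, if_pos hcond]
      nlinarith [sq_nonneg (mp (i2 k)), hg2 k]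
    · simp only [hRm, if_neg hk]; exact hBmpos _
  -- absorb the Rc term
  have S4 : (∑' k, Rc k) ≤ ∑' k, Bc k := by
    apply Summable.tsum_le_tsum_of_inj i1 hinj1 (fun j _ => hBcpos j) _ sRc sBc
    intro k
    by_cases hk : N ≤ |k|
    · have hcond : N ≤ |i1 k| := by rw [habs_i1]; omega
      simp only [hRc, hBc, if_pos hk, if_pos hcond]
      have e1 : |((i1 k : ℤ):ℝ)| = (k.natAbs:ℝ) + 1 := by
        rw [habsR, hi1abs k]; push_cast; ring
      have e2 : |(k:ℝ)| = (k.natAbs:ℝ) := habsR k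
      rw [hg1' k, e1, e2]
      nlinarith [mul_nonneg (mul_nonneg (mul_nonneg
        (by positivity : (0:ℝ) ≤ 4*((k.natAbs:ℝ)+1)^2)
        (sub_nonneg.mpr hE1)) (hg0 k).le) (sq_nonneg (c (i1 k)))]
    · simp only [hRc, if_neg hk]; exact hBcpos _
  -- the W term
  have S5 : (∑' k, RW k) ≤ (1/(2*Real.exp σ)) * ∑' k, Rt k := by
    rw [← tsum_mul_left]
    apply Summable.tsum_le_tsum_of_inj i1 hinj1
      (fun j _ => mul_nonneg (by positivity) (hRtpos j)) _ sRW (sRt.mul_left _)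
    intro k
    by_cases hk : N ≤ |k|
    · have hcond : N + 1 ≤ |i1 k| := by rw [habs_i1]; omega
      simp only [hRW, hRt, if_pos hk, if_pos hcond]
      rw [hg1' k]
      have hcancel : 1/(2*Real.exp σ) * (8*((k.natAbs:ℝ)+1)*Real.exp σ*g k * W (i1 k)^2)
          = 4*((k.natAbs:ℝ)+1)*g k*W (i1 k)^2 := by
        field_simp; ring
      rw [hcancel]
      nlinarith [mul_nonneg (mul_nonneg
        (by positivity : (0:ℝ) ≤ 4*(k.natAbs:ℝ)) (hg0 k).le) (sq_nonneg (W (i1 k)))]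
    · simp only [hRW, if_neg hk]
      exact mul_nonneg (by positivity) (hRtpos _)
  -- lower bound for A
  have S6 : a * (∑' k, Lf k) ≤ ∑' k, A k := by
    rw [← tsum_mul_left]
    apply Summable.tsum_le_tsum _ (sLf.mul_left a) sA
    intro k
    by_cases hk : N ≤ |k|
    · simp only [hLf, hA, if_pos hk]
      have h1k : (1:ℝ) ≤ |(k:ℝ)| := by
        rw [habsR]
        have hk' := hk
        rw [Int.abs_eq_natAbs] at hk'
        have : (1:ℤ) ≤ k.natAbs := by omega
        exact_mod_cast this
      nlinarith [mul_nonneg (mul_nonneg (mul_nonneg ha.le (hg0 k).le)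
        (sq_nonneg (n k))) (sub_nonneg.mpr h1k)]
    · simp only [hLf, hA, if_neg hk]; simp
  have hRtsum0 : 0 ≤ ∑' k, Rt k := tsum_nonneg hRtpos
  -- rewrite the goal
  have egoalL : (∑' k : ℤ, if N ≤ |k| then
      ((8 : ℝ) ^ k.natAbs * (k.natAbs.factorial : ℝ)
        * Real.exp ((k.natAbs : ℝ) * σ)) * n k ^ 2 else 0) = ∑' k, Lf k := by
    apply tsum_congr; intro k; simp only [hLf, hg, cwN]
  have egoalR : (∑' k : ℤ, if N + 1 ≤ |k| then
      ((8 : ℝ) ^ k.natAbs * (k.natAbs.factorial : ℝ)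
        * Real.exp ((k.natAbs : ℝ) * σ)) * W k ^ 2 else 0) = ∑' k, Rt k := by
    apply tsum_congr; intro k; simp only [hRt, hg, cwN]
  rw [egoalL, egoalR]
  have hmain : a * (∑' k, Lf k) ≤ 1/(2*Real.exp σ) * ∑' k, Rt k := by linarith
  rw [← mul_le_mul_iff_right₀ ha]
  have e : a * (2 / (a * Real.exp σ) * ∑' k, Rt k)
      = (2 / Real.exp σ) * ∑' k, Rt k := by
    field_simp
  rw [e]
  have h3 : 1/(2*Real.exp σ) * (∑' k, Rt k) ≤ 2/Real.exp σ * ∑' k, Rt k := by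
    apply mul_le_mul_of_nonneg_right _ hRtsum0
    rw [div_le_div_iff₀ (by positivity) hE0]
    nlinarith
  linarith


set_option maxHeartbeats 1600000 in


/-- Abstract magnetic Carleman estimate (Theorem 3.1): for a finitely supported
family of Fourier modes `u_k` (`Vu_k = iku_k`), with `w_k = (Fu)_k
= η⁺u_{k−1} + η⁻u_{k+1} + ikκu_k`, magnetic curvature pinched as
`−2b‖w‖² ≤ ⟪Kw, w⟫ ≤ −2a‖w‖² < 0`, and weights `γ_k² = 8^{|k|}·|k|!·e^{|k|σ}`,
one has `Σ_{|k|≥N} γ_k²‖u_k‖² ≤ (2/(ae^σ))·Σ_{|k|≥N+1} γ_k²‖w_k‖²`. -/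
theorem magnetic_carleman_estimate
    {E : Type*} [NormedAddCommGroup E] [InnerProductSpace ℂ E]
    (F P V κ K : E →ₗ[ℂ] E)
    (hFskew : ∀ u w : E, (inner ℂ w (F u) : ℂ) = -(inner ℂ (F w) u : ℂ))
    (hPskew : ∀ u w : E, (inner ℂ w (P u) : ℂ) = -(inner ℂ (P w) u : ℂ))
    (hVskew : ∀ u w : E, (inner ℂ w (V u) : ℂ) = -(inner ℂ (V w) u : ℂ))
    (hVF : ∀ u : E, V (F u) - F (V u) = P u)
    (hVP : ∀ u : E, V (P u) - P (V u) = -F u + κ (V u))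
    (hFP : ∀ u : E, F (P u) - P (F u) = -κ (F u) + K (V u))
    (hVκ : ∀ u : E, V (κ u) = κ (V u))
    (X ηp ηm : E →ₗ[ℂ] E)
    (hX : ∀ u : E, X u = F u - κ (V u))
    (hηp : ∀ u : E, ηp u = (2 : ℂ)⁻¹ • (X u - Complex.I • P u))
    (hηm : ∀ u : E, ηm u = (2 : ℂ)⁻¹ • (X u + Complex.I • P u))
    (a b : ℝ) (ha : 0 < a) (hb : 0 < b)
    (hKreal : ∀ w : E, (inner ℂ w (K w) : ℂ).im = 0)
    (hKlb : ∀ w : E, -2 * b * ‖w‖ ^ 2 ≤ (inner ℂ w (K w) : ℂ).re)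
    (hKub : ∀ w : E, (inner ℂ w (K w) : ℂ).re ≤ -2 * a * ‖w‖ ^ 2)
    (u : ℤ → E) (hufin : {k : ℤ | u k ≠ 0}.Finite)
    (hu : ∀ k : ℤ, V (u k) = (Complex.I * (k : ℂ)) • u k)
    (w : ℤ → E)
    (hw : ∀ k : ℤ, w k = ηp (u (k - 1)) + ηm (u (k + 1))
      + (Complex.I * (k : ℂ)) • κ (u k)) :
    ∀ σ : ℝ, 0 < σ → ∀ N : ℤ, 1 ≤ N →
      (∑' k : ℤ, if N ≤ |k| then
          ((8 : ℝ) ^ k.natAbs * (k.natAbs.factorial : ℝ)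
            * Real.exp ((k.natAbs : ℝ) * σ)) * ‖u k‖ ^ 2
        else 0)
        ≤ (2 / (a * Real.exp σ)) *
          ∑' k : ℤ, if N + 1 ≤ |k| then
            ((8 : ℝ) ^ k.natAbs * (k.natAbs.factorial : ℝ)
              * Real.exp ((k.natAbs : ℝ) * σ)) * ‖w k‖ ^ 2
          else 0 := by
  intro σ hσ N hN

  have hPdec : ∀ x : E, P x = Complex.I • ηp x - Complex.I • ηm x := by
    intro x; rw [hηp, hηm]; match_scalars <;> norm_num [Complex.ext_iff]
  have hVmode : ∀ (c : ℂ) (x : E), V x = c • x → V (κ x) = c • κ x := by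
    intro c x hx; rw [hVκ, hx, map_smul]
  have hVF' : ∀ x : E, V (F x) = F (V x) + P x := by
    intro x; rw [← hVF x]; abel
  have hVP' : ∀ x : E, V (P x) = P (V x) - F x + κ (V x) := by
    intro x
    have h := hVP x
    rw [sub_eq_iff_eq_add] at h
    rw [h]; abel
  have hFP' : ∀ x : E, F (P x) = P (F x) - κ (F x) + K (V x) := by
    intro x
    have h := hFP x
    rw [sub_eq_iff_eq_add] at h
    rw [h]; abel
  have hVX : ∀ (c : ℂ) (x : E), V x = c • x → V (X x) = c • X x + P x := by
    intro c x hx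
    simp only [hX, map_sub, hVF', hVκ, hx, map_smul]
    module
  have hVPx : ∀ (c : ℂ) (x : E), V x = c • x → V (P x) = c • P x - X x := by
    intro c x hx
    simp only [hX, hVP', hx, map_smul]
    module
  have hVetap : ∀ (c : ℂ) (x : E), V x = c • x → V (ηp x) = (c + Complex.I) • ηp x := by
    intro c x hx
    rw [hηp]
    simp only [map_smul, map_sub]
    rw [hVX c x hx, hVPx c x hx]
    match_scalars <;> norm_num [Complex.ext_iff] <;> constructor <;> ring
  have hVetam : ∀ (c : ℂ) (x : E), V x = c • x → V (ηm x) = (c - Complex.I) • ηm x := by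
    intro c x hx
    rw [hηm]
    simp only [map_smul, map_add]
    rw [hVX c x hx, hVPx c x hx]
    match_scalars <;> norm_num [Complex.ext_iff] <;> constructor <;> ring
  have hcommA : ∀ x : E, ηm (ηp x) - ηp (ηm x)
      = (Complex.I/2) • (P (X x) - X (P x)) := by
    intro x
    simp only [hηp, hηm, map_smul, map_sub, map_add, smul_sub, smul_add, smul_smul]
    module
  have hcommB : ∀ (c : ℂ) (x : E), V x = c • x →
      P (X x) - X (P x) = (-c) • (K x - κ (κ x) + P (κ x) - κ (P x)) := by
    intro c x hx
    have e1 : V (P x) = c • P x - F x + c • κ x := by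
      rw [hVP', hx]; simp only [map_smul]
    simp only [hX]
    rw [hFP', e1, hx]
    simp only [map_smul, map_sub, map_add]
    module
  -- orthogonality of distinct modes
  have horth : ∀ (r t : ℝ) (x y : E), V x = (Complex.I * (r:ℂ)) • x →
      V y = (Complex.I * (t:ℂ)) • y → r ≠ t → (inner ℂ x y : ℂ) = 0 := by
    intro r t x y hx hy hrt
    have h := hVskew y x
    rw [hx, hy, inner_smul_right, inner_smul_left] at h
    simp only [map_mul, Complex.conj_I, Complex.conj_ofReal] at h
    have hz : (Complex.I * (t:ℂ) - Complex.I * (r:ℂ)) * (inner ℂ x y : ℂ) = 0 := by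
      linear_combination h
    have hfac : (Complex.I * (t:ℂ) - Complex.I * (r:ℂ)) ≠ 0 := by
      rw [← mul_sub]
      apply mul_ne_zero Complex.I_ne_zero
      rw [sub_ne_zero]
      exact_mod_cast hrt.symm
    exact (mul_eq_zero.mp hz).resolve_left hfac
  -- degree shifts
  have hdegp : ∀ (r : ℝ) (x : E), V x = (Complex.I * (r:ℂ)) • x →
      V (ηp x) = (Complex.I * ((r+1 : ℝ):ℂ)) • ηp x := by
    intro r x hx
    rw [hVetap _ x hx]
    congr 1
    push_cast; ring
  have hdegm : ∀ (r : ℝ) (x : E), V x = (Complex.I * (r:ℂ)) • x →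
      V (ηm x) = (Complex.I * ((r-1 : ℝ):ℂ)) • ηm x := by
    intro r x hx
    rw [hVetam _ x hx]
    congr 1
    push_cast; ring
  have hdegk : ∀ (r : ℝ) (x : E), V x = (Complex.I * (r:ℂ)) • x →
      V (κ x) = (Complex.I * (r:ℂ)) • κ x := fun r x hx => hVmode _ x hx
  -- adjoint relations on modes
  have hadjp : ∀ (r : ℝ) (x y : E), V x = (Complex.I * (r:ℂ)) • x →
      V y = (Complex.I * ((r+1:ℝ):ℂ)) • y →
      (inner ℂ y (ηp x) : ℂ) = -(inner ℂ (ηm y) x : ℂ) := by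
    intro r x y hx hy
    have h := hPskew x y
    rw [hPdec x, hPdec y] at h
    simp only [inner_sub_right, inner_sub_left, inner_smul_right, inner_smul_left,
      Complex.conj_I] at h
    rw [horth (r+1) (r-1) y (ηm x) hy (hdegm r x hx) (by intro hh; linarith)] at h
    rw [horth (r+2) r (ηp y) x (by
        have := hdegp (r+1) y hy
        rw [show ((r+1:ℝ)+1 : ℝ) = (r+2 : ℝ) by ring] at this
        exact this) hx (by intro hh; linarith)] at h
    linear_combination (-Complex.I) * h + ((inner ℂ y (ηp x) : ℂ) + (inner ℂ (ηm y) x : ℂ)) * Complex.I_sq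
  have hadjm : ∀ (r : ℝ) (x y : E), V x = (Complex.I * (r:ℂ)) • x →
      V y = (Complex.I * ((r-1:ℝ):ℂ)) • y →
      (inner ℂ y (ηm x) : ℂ) = -(inner ℂ (ηp y) x : ℂ) := by
    intro r x y hx hy
    have h := hPskew x y
    rw [hPdec x, hPdec y] at h
    simp only [inner_sub_right, inner_sub_left, inner_smul_right, inner_smul_left,
      Complex.conj_I] at h
    rw [horth (r-1) (r+1) y (ηp x) hy (hdegp r x hx) (by intro hh; linarith)] at h
    rw [horth (r-2) r (ηm y) x (by
        have := hdegm (r-1) y hy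
        rw [show ((r-1:ℝ)-1 : ℝ) = (r-2 : ℝ) by ring] at this
        exact this) hx (by intro hh; linarith)] at h
    linear_combination Complex.I * h + ((inner ℂ y (ηm x) : ℂ) + (inner ℂ (ηp y) x : ℂ)) * Complex.I_sq
  -- F decomposition on a mode
  have hFdec : ∀ (r : ℝ) (x : E), V x = (Complex.I * (r:ℂ)) • x →
      F x = ηp x + ηm x + (Complex.I * (r:ℂ)) • κ x := by
    intro r x hx
    rw [hηp, hηm, hX, hx]
    simp only [map_smul]
    module
  -- symmetry of κ on a nonzero mode
  have hκsym : ∀ (r : ℝ), r ≠ 0 → ∀ (x y : E), V x = (Complex.I * (r:ℂ)) • x →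
      V y = (Complex.I * (r:ℂ)) • y →
      (inner ℂ y (κ x) : ℂ) = (inner ℂ (κ y) x : ℂ) := by
    intro r hr x y hx hy
    have h := hFskew x y
    rw [hFdec r x hx, hFdec r y hy] at h
    simp only [inner_add_right, inner_add_left, inner_smul_right, inner_smul_left,
      map_mul, Complex.conj_I, Complex.conj_ofReal] at h
    rw [horth r (r+1) y (ηp x) hy (hdegp r x hx) (by intro hh; linarith)] at h
    rw [horth r (r-1) y (ηm x) hy (hdegm r x hx) (by intro hh; linarith)] at h
    rw [horth (r+1) r (ηp y) x (hdegp r y hy) hx (by intro hh; linarith)] at h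
    rw [horth (r-1) r (ηm y) x (hdegm r y hy) hx (by intro hh; linarith)] at h
    have hz : (Complex.I * (r:ℂ)) * ((inner ℂ y (κ x) : ℂ) - (inner ℂ (κ y) x : ℂ)) = 0 := by
      linear_combination h
    have hfac : (Complex.I * (r:ℂ)) ≠ 0 :=
      mul_ne_zero Complex.I_ne_zero (by exact_mod_cast hr)
    exact sub_eq_zero.mp ((mul_eq_zero.mp hz).resolve_left hfac)
  -- the key identity
  have hkeyR : ∀ (r : ℝ), r ≠ 0 → ∀ (x : E), V x = (Complex.I * (r:ℂ)) • x →
      ‖ηm x‖^2 - ‖ηp x‖^2 = r/2 * ((inner ℂ x (K x) : ℂ).re - ‖κ x‖^2) := by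
    intro r hr x hx
    have hadj1 : (inner ℂ (ηp x) (ηp x) : ℂ) = -(inner ℂ (ηm (ηp x)) x : ℂ) :=
      hadjp r x (ηp x) hx (hdegp r x hx)
    have hadj2 : (inner ℂ (ηm x) (ηm x) : ℂ) = -(inner ℂ (ηp (ηm x)) x : ℂ) :=
      hadjm r x (ηm x) hx (hdegm r x hx)
    have hcc : ηm (ηp x) - ηp (ηm x)
        = ((r:ℂ)/2) • (K x - κ (κ x) + P (κ x) - κ (P x)) := by
      rw [hcommA x, hcommB (Complex.I * (r:ℂ)) x hx, smul_smul]
      congr 1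
      linear_combination (-(r:ℂ)/2) * Complex.I_sq
    have hconj : (starRingEnd ℂ) ((r:ℂ)/2) = ((r:ℂ)/2) := by
      rw [map_div₀, Complex.conj_ofReal, map_ofNat]
    have hdiff : (inner ℂ (ηm x) (ηm x) : ℂ) - (inner ℂ (ηp x) (ηp x) : ℂ)
        = ((r:ℂ)/2) * ((inner ℂ (K x) x : ℂ) - (inner ℂ (κ (κ x)) x : ℂ)
            + (inner ℂ (P (κ x)) x : ℂ) - (inner ℂ (κ (P x)) x : ℂ)) := by
      rw [hadj1, hadj2, show -(inner ℂ (ηp (ηm x)) x : ℂ) - -(inner ℂ (ηm (ηp x)) x : ℂ)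
          = (inner ℂ (ηm (ηp x) - ηp (ηm x)) x : ℂ) by rw [inner_sub_left]; ring,
        hcc, inner_smul_left, hconj, inner_sub_left, inner_add_left, inner_sub_left]
      try ring
    have z1 : (inner ℂ (P (κ x)) x : ℂ) = 0 := by
      rw [hPdec (κ x)]
      simp only [inner_sub_left, inner_smul_left, Complex.conj_I]
      rw [horth (r+1) r (ηp (κ x)) x (hdegp r (κ x) (hdegk r x hx)) hx
        (by intro hh; linarith)]
      rw [horth (r-1) r (ηm (κ x)) x (hdegm r (κ x) (hdegk r x hx)) hx
        (by intro hh; linarith)]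
      ring
    have z2 : (inner ℂ (κ (P x)) x : ℂ) = 0 := by
      rw [hPdec x]
      simp only [map_sub, map_smul, inner_sub_left, inner_smul_left, Complex.conj_I]
      rw [horth (r+1) r (κ (ηp x)) x (hdegk (r+1) (ηp x) (hdegp r x hx)) hx
        (by intro hh; linarith)]
      rw [horth (r-1) r (κ (ηm x)) x (hdegk (r-1) (ηm x) (hdegm r x hx)) hx
        (by intro hh; linarith)]
      ring
    have z3 : (inner ℂ (κ (κ x)) x : ℂ) = (inner ℂ (κ x) (κ x) : ℂ) :=
      (hκsym r hr x (κ x) hx (hdegk r x hx)).symm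
    have z4 : (inner ℂ (K x) x : ℂ) = (((inner ℂ x (K x) : ℂ).re : ℝ) : ℂ) := by
      apply Complex.ext
      · rw [← inner_conj_symm (K x) x]
        simp only [Complex.conj_re, Complex.ofReal_re]
      · rw [← inner_conj_symm (K x) x]
        simp only [Complex.conj_im, Complex.ofReal_im, hKreal x, neg_zero]
    have hhalf : ((r:ℂ))/2 = ((r/2 : ℝ) : ℂ) := by push_cast; ring
    rw [z1, z2, z3, z4, hhalf] at hdiff
    have hre := congrArg Complex.re hdiff
    simp only [Complex.sub_re, Complex.add_re, Complex.zero_re, Complex.ofReal_re,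
      Complex.re_ofReal_mul] at hre
    have em : (inner ℂ (ηm x) (ηm x) : ℂ).re = ‖ηm x‖^2 := by
      rw [← RCLike.re_to_complex]; exact inner_self_eq_norm_sq (ηm x)
    have ep : (inner ℂ (ηp x) (ηp x) : ℂ).re = ‖ηp x‖^2 := by
      rw [← RCLike.re_to_complex]; exact inner_self_eq_norm_sq (ηp x)
    have ek : (inner ℂ (κ x) (κ x) : ℂ).re = ‖κ x‖^2 := by
      rw [← RCLike.re_to_complex]; exact inner_self_eq_norm_sq (κ x)
    rw [em, ep, ek] at hre
    linarith [hre]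
  have hu' : ∀ k : ℤ, V (u k) = (Complex.I * (((k:ℝ)):ℂ)) • u k := by
    intro k
    rw [hu k]
    norm_num
  -- key inequalities
  have keyP : ∀ k : ℤ, 1 ≤ k →
      ‖ηm (u k)‖^2 + a*(k:ℝ)*‖u k‖^2 + (k:ℝ)/2*‖κ (u k)‖^2 ≤ ‖ηp (u k)‖^2 := by
    intro k hk1
    have hr : ((k:ℝ)) ≠ 0 := by
      have : (k:ℤ) ≠ 0 := by omega
      exact_mod_cast this
    have hid := hkeyR (k:ℝ) hr (u k) (hu' k)
    have hub := hKub (u k)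
    have hk1' : (1:ℝ) ≤ (k:ℝ) := by exact_mod_cast hk1
    have hk0 : (0:ℝ) ≤ (k:ℝ)/2 := by linarith
    have h2 := mul_le_mul_of_nonneg_left hub hk0
    nlinarith [hid, h2]
  have keyM : ∀ k : ℤ, k ≤ -1 →
      ‖ηp (u k)‖^2 + a*(-(k:ℝ))*‖u k‖^2 + (-(k:ℝ))/2*‖κ (u k)‖^2 ≤ ‖ηm (u k)‖^2 := by
    intro k hk1
    have hr : ((k:ℝ)) ≠ 0 := by
      have : (k:ℤ) ≠ 0 := by omega
      exact_mod_cast this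
    have hid := hkeyR (k:ℝ) hr (u k) (hu' k)
    have hub := hKub (u k)
    have hk1' : ((k:ℝ)) ≤ -1 := by exact_mod_cast hk1
    have hk0 : ((k:ℝ))/2 ≤ 0 := by linarith
    have h2 := mul_le_mul_of_nonpos_left hub hk0
    nlinarith [hid, h2]
  -- triangle inequalities
  have triP : ∀ k : ℤ, 0 ≤ k →
      ‖ηp (u k)‖ ≤ ‖w (k+1)‖ + ‖ηm (u (k+2))‖ + ((k:ℝ)+1)*‖κ (u (k+1))‖ := by
    intro k hk0
    obtain ⟨r1, hr1⟩ : ∃ r1 : ℝ, r1 = (k:ℝ)+1 := ⟨_, rfl⟩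
    have hw1 := hw (k+1)
    rw [show k+1-1 = k by ring, show k+1+1 = k+2 by ring] at hw1
    have heq : ηp (u k) = w (k+1) - ηm (u (k+2))
        - (Complex.I * ((r1:ℝ):ℂ)) • κ (u (k+1)) := by
      rw [hw1]
      have : (((k+1 : ℤ)):ℂ) = ((r1:ℝ):ℂ) := by rw [hr1]; push_cast; ring
      rw [this]
      abel
    have hnorm : ‖(Complex.I * ((r1:ℝ):ℂ)) • κ (u (k+1))‖
        = ((k:ℝ)+1) * ‖κ (u (k+1))‖ := by
      rw [norm_smul, norm_mul, Complex.norm_I, one_mul, Complex.norm_real,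
        Real.norm_eq_abs, abs_of_nonneg (by
          have : (0:ℝ) ≤ (k:ℝ) := by exact_mod_cast hk0
          rw [hr1]; linarith), hr1]
    calc ‖ηp (u k)‖
        = ‖w (k+1) - ηm (u (k+2)) - (Complex.I * ((r1:ℝ):ℂ)) • κ (u (k+1))‖ := by
          rw [← heq]
      _ ≤ ‖w (k+1) - ηm (u (k+2))‖ + ‖(Complex.I * ((r1:ℝ):ℂ)) • κ (u (k+1))‖ :=
          norm_sub_le _ _
      _ ≤ (‖w (k+1)‖ + ‖ηm (u (k+2))‖) + ((k:ℝ)+1) * ‖κ (u (k+1))‖ := by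
          rw [hnorm]
          exact add_le_add_left (norm_sub_le _ _) _
      _ = ‖w (k+1)‖ + ‖ηm (u (k+2))‖ + ((k:ℝ)+1)*‖κ (u (k+1))‖ := by ring
  have triM : ∀ k : ℤ, k ≤ 0 →
      ‖ηm (u k)‖ ≤ ‖w (k-1)‖ + ‖ηp (u (k-2))‖ + (1-(k:ℝ))*‖κ (u (k-1))‖ := by
    intro k hk0
    obtain ⟨r1, hr1⟩ : ∃ r1 : ℝ, r1 = (k:ℝ)-1 := ⟨_, rfl⟩
    have hw1 := hw (k-1)
    rw [show k-1-1 = k-2 by ring, show k-1+1 = k by ring] at hw1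
    have heq : ηm (u k) = w (k-1) - ηp (u (k-2))
        - (Complex.I * ((r1:ℝ):ℂ)) • κ (u (k-1)) := by
      rw [hw1]
      have : (((k-1 : ℤ)):ℂ) = ((r1:ℝ):ℂ) := by rw [hr1]; push_cast; ring
      rw [this]
      abel
    have hnorm : ‖(Complex.I * ((r1:ℝ):ℂ)) • κ (u (k-1))‖
        = (1-(k:ℝ)) * ‖κ (u (k-1))‖ := by
      rw [norm_smul, norm_mul, Complex.norm_I, one_mul, Complex.norm_real,
        Real.norm_eq_abs, abs_of_nonpos (by
          have : ((k:ℝ)) ≤ 0 := by exact_mod_cast hk0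
          rw [hr1]; linarith), hr1]
      ring_nf
    calc ‖ηm (u k)‖
        = ‖w (k-1) - ηp (u (k-2)) - (Complex.I * ((r1:ℝ):ℂ)) • κ (u (k-1))‖ := by
          rw [← heq]
      _ ≤ ‖w (k-1) - ηp (u (k-2))‖ + ‖(Complex.I * ((r1:ℝ):ℂ)) • κ (u (k-1))‖ :=
          norm_sub_le _ _
      _ ≤ (‖w (k-1)‖ + ‖ηp (u (k-2))‖) + (1-(k:ℝ)) * ‖κ (u (k-1))‖ := by
          rw [hnorm]
          exact add_le_add_left (norm_sub_le _ _) _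
      _ = ‖w (k-1)‖ + ‖ηp (u (k-2))‖ + (1-(k:ℝ))*‖κ (u (k-1))‖ := by ring
  -- support
  have hsupp : ∀ k : ℤ, k ∉ hufin.toFinset.biUnion (fun j => Finset.Icc (j-1) (j+1)) →
      ‖u k‖ = 0 ∧ ‖ηm (u k)‖ = 0 ∧ ‖ηp (u k)‖ = 0 ∧ ‖κ (u k)‖ = 0 ∧ ‖w k‖ = 0 := by
    intro k hk
    have hz : ∀ d : ℤ, -1 ≤ d → d ≤ 1 → u (k+d) = 0 := by
      intro d h1 h2
      by_contra hne
      exact hk (Finset.mem_biUnion.mpr ⟨k+d, hufin.mem_toFinset.mpr hne,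
        Finset.mem_Icc.mpr ⟨by omega, by omega⟩⟩)
    have h00 : u k = 0 := by simpa using hz 0 (by norm_num) (by norm_num)
    have hm1 : u (k-1) = 0 := by simpa [← sub_eq_add_neg] using hz (-1) (by norm_num) (by norm_num)
    have hp1 : u (k+1) = 0 := by simpa using hz 1 (by norm_num) (by norm_num)
    refine ⟨by simp [h00], by simp [h00], by simp [h00], by simp [h00], ?_⟩
    rw [hw k, hm1, hp1, h00]
    simp
  exact sum_machine a σ ha hσ N hN
    (fun k => ‖u k‖) (fun k => ‖ηm (u k)‖) (fun k => ‖ηp (u k)‖)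
    (fun k => ‖κ (u k)‖) (fun k => ‖w k‖)
    (fun k => norm_nonneg _) (fun k => norm_nonneg _) (fun k => norm_nonneg _)
    (fun k => norm_nonneg _) (fun k => norm_nonneg _)
    (hufin.toFinset.biUnion (fun j => Finset.Icc (j-1) (j+1)))
    hsupp keyP keyM triP triM
end

section
/- (Abstract degree reduction, core of Corollary 3.2.) Assume a, b > 0 and that for every w ∈ E the number ⟪K̂w, w⟫ is real and satisfies −2b‖w‖² ≤ ⟪K̂w, w⟫ ≤ −2a‖w‖². Let (u_k)_{k∈ℤ} be a finitely supported family in E with V u_k = i k u_k for every k ∈ ℤ, and for each k ∈ ℤ set w_k := η⁺u_{k−1} + η⁻u_{k+1} + i k κ̂ u_k. Let n ≥ 1 be an integer and suppose w_k = 0 for all |k| ≥ n + 1. Then u_k = 0 for all |k| ≥ n. -/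
/-- Abstract degree reduction (core of Corollary 3.2): for a finitely supported
family of Fourier modes `u_k` (`Vu_k = iku_k`) with `w_k = (Fu)_k
= η⁺u_{k−1} + η⁻u_{k+1} + ikκu_k` and pinched negative curvature
`−2b‖w‖² ≤ ⟪Kw, w⟫ ≤ −2a‖w‖²`, if `w_k = 0` for all `|k| ≥ n + 1` (with `n ≥ 1`)
then `u_k = 0` for all `|k| ≥ n`. -/
theorem magnetic_degree_reduction
    {E : Type*} [NormedAddCommGroup E] [InnerProductSpace ℂ E]
    (F P V κ K : E →ₗ[ℂ] E)
    (hFskew : ∀ u w : E, (inner ℂ w (F u) : ℂ) = -(inner ℂ (F w) u : ℂ))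
    (hPskew : ∀ u w : E, (inner ℂ w (P u) : ℂ) = -(inner ℂ (P w) u : ℂ))
    (hVskew : ∀ u w : E, (inner ℂ w (V u) : ℂ) = -(inner ℂ (V w) u : ℂ))
    (hVF : ∀ u : E, V (F u) - F (V u) = P u)
    (hVP : ∀ u : E, V (P u) - P (V u) = -F u + κ (V u))
    (hFP : ∀ u : E, F (P u) - P (F u) = -κ (F u) + K (V u))
    (hVκ : ∀ u : E, V (κ u) = κ (V u))
    (X ηp ηm : E →ₗ[ℂ] E)
    (hX : ∀ u : E, X u = F u - κ (V u))
    (hηp : ∀ u : E, ηp u = (2 : ℂ)⁻¹ • (X u - Complex.I • P u))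
    (hηm : ∀ u : E, ηm u = (2 : ℂ)⁻¹ • (X u + Complex.I • P u))
    (a b : ℝ) (ha : 0 < a) (hb : 0 < b)
    (hKreal : ∀ w : E, (inner ℂ w (K w) : ℂ).im = 0)
    (hKlb : ∀ w : E, -2 * b * ‖w‖ ^ 2 ≤ (inner ℂ w (K w) : ℂ).re)
    (hKub : ∀ w : E, (inner ℂ w (K w) : ℂ).re ≤ -2 * a * ‖w‖ ^ 2)
    (u : ℤ → E) (hufin : {k : ℤ | u k ≠ 0}.Finite)
    (hu : ∀ k : ℤ, V (u k) = (Complex.I * (k : ℂ)) • u k)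
    (w : ℤ → E)
    (hw : ∀ k : ℤ, w k = ηp (u (k - 1)) + ηm (u (k + 1))
      + (Complex.I * (k : ℂ)) • κ (u k))
    (n : ℤ) (hn : 1 ≤ n)
    (hwvanish : ∀ k : ℤ, n + 1 ≤ |k| → w k = 0) :
    ∀ k : ℤ, n ≤ |k| → u k = 0 := by
  -- Step 1: ⟪κv, Pv⟫ = 0 for eigenvectors v
  have h1 : ∀ (k : ℤ) (v : E), V v = (Complex.I * (k:ℂ)) • v →
      (inner ℂ (κ v) (P v) : ℂ) = 0 := by
    intro k v hv
    have e : P v = V (F v) - F (V v) := (hVF v).symm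
    rw [e, inner_sub_right, hVskew (F v) (κ v), hVκ, hv, map_smul, map_smul,
      inner_smul_left, inner_smul_right]
    simp only [map_mul, Complex.conj_I, map_intCast]
    ring
  -- Step 2: ⟪v, κ(Pv)⟫ = 0
  have h2 : ∀ (k : ℤ) (v : E), V v = (Complex.I * (k:ℂ)) • v →
      (inner ℂ v (κ (P v)) : ℂ) = 0 := by
    intro k v hv
    have e1 : V (F v) = (Complex.I * (k:ℂ)) • F v + P v := by
      have h := hVF v
      rw [hv, map_smul, sub_eq_iff_eq_add'] at h
      exact h
    have h := hVskew (κ (F v)) v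
    rw [hVκ, e1, map_add, map_smul, inner_add_right, inner_smul_right, hv,
      inner_smul_left] at h
    simp only [map_mul, Complex.conj_I, map_intCast] at h
    linear_combination h
  -- Step 3: ⟪v, κ(Fv)⟫ = ik ⟪v, κ²v⟫
  have h3 : ∀ (k : ℤ) (v : E), V v = (Complex.I * (k:ℂ)) • v →
      (inner ℂ v (κ (F v)) : ℂ) = Complex.I * (k:ℂ) * inner ℂ v (κ (κ v)) := by
    intro k v hv
    have e2 : F v = (Complex.I * (k:ℂ)) • P v - V (P v) + (Complex.I * (k:ℂ)) • κ v := by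
      have h := hVP v
      rw [hv, map_smul, map_smul] at h
      linear_combination (norm := module) h
    rw [e2, map_add, map_sub, map_smul, map_smul, inner_add_right, inner_sub_right,
      inner_smul_right, inner_smul_right, ← hVκ, hVskew (κ (P v)) v, hv,
      inner_smul_left, h2 k v hv]
    simp only [map_mul, Complex.conj_I, map_intCast]
    ring
  -- Step 4: κ∘V is weakly skew-symmetric
  have h4 : ∀ x y : E, (inner ℂ x (κ (V y)) : ℂ) = -(inner ℂ (κ (V x)) y : ℂ) := by
    intro x y
    have ey : κ (V y) = V (P y) - P (V y) + F y := by
      linear_combination (norm := module) -hVP y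
    have ex : κ (V x) = V (P x) - P (V x) + F x := by
      linear_combination (norm := module) -hVP x
    rw [ey, ex, inner_add_right, inner_sub_right, inner_add_left, inner_sub_left,
      hVskew (P y) x, hPskew (V y) x, hPskew y (V x), hVskew y (P x), hFskew y x]
    ring
  -- Step 5: ⟪v, κ²v⟫ = ‖κv‖² on nonzero modes
  have h5 : ∀ (k : ℤ) (v : E), k ≠ 0 → V v = (Complex.I * (k:ℂ)) • v →
      (inner ℂ v (κ (κ v)) : ℂ) = inner ℂ (κ v) (κ v) := by
    intro k v hk hv
    have h := h4 v (κ v)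
    rw [hVκ, hv, map_smul, map_smul, inner_smul_right, inner_smul_left] at h
    have hIk : (Complex.I * (k:ℂ)) ≠ 0 := by
      simp [Complex.I_ne_zero, Complex.ext_iff]
      exact_mod_cast hk
    apply mul_left_cancel₀ hIk
    rw [h]
    simp only [map_mul, Complex.conj_I, map_intCast]
    ring
  -- Step 6: the complex energy identity
  have h6 : ∀ (k : ℤ) (v : E), k ≠ 0 → V v = (Complex.I * (k:ℂ)) • v →
      2 * ((inner ℂ (ηp v) (ηp v) : ℂ) - (inner ℂ (ηm v) (ηm v) : ℂ))
        = (k:ℂ) * ((inner ℂ (κ v) (κ v) : ℂ) - (inner ℂ v (K v) : ℂ)) := by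
    intro k v hk hv
    have hs : (inner ℂ (X v) (P v) : ℂ) = inner ℂ (F v) (P v) := by
      rw [hX, inner_sub_left, hv, map_smul, inner_smul_left, h1 k v hv]
      ring
    have hsc : (inner ℂ (P v) (X v) : ℂ) = inner ℂ (P v) (F v) := by
      have hc : (inner ℂ (P v) (κ v) : ℂ) = 0 := by
        rw [← inner_conj_symm, h1 k v hv, map_zero]
      rw [hX, inner_sub_right, hv, map_smul, inner_smul_right, hc]
      ring
    have hd : (inner ℂ (F v) (P v) : ℂ) - inner ℂ (P v) (F v)
        = Complex.I * (k:ℂ) * ((inner ℂ (κ v) (κ v) : ℂ) - inner ℂ v (K v)) := by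
      have hL : (inner ℂ v (F (P v)) : ℂ) = -(inner ℂ (F v) (P v)) := hFskew (P v) v
      have hR : (inner ℂ v (P (F v)) : ℂ) = -(inner ℂ (P v) (F v)) := hPskew (F v) v
      have hsub : (inner ℂ v (F (P v)) : ℂ) - inner ℂ v (P (F v))
          = inner ℂ v (-κ (F v) + K (V v)) := by
        rw [← inner_sub_right, hFP v]
      rw [inner_add_right, inner_neg_right, h3 k v hv, h5 k v hk hv, hv, map_smul,
        inner_smul_right, hL, hR] at hsub
      linear_combination -hsub
    have hnorm : (inner ℂ (ηp v) (ηp v) : ℂ) - (inner ℂ (ηm v) (ηm v) : ℂ)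
        = -(Complex.I/2) * ((inner ℂ (X v) (P v) : ℂ) - (inner ℂ (P v) (X v) : ℂ)) := by
      rw [hηp, hηm]
      simp only [inner_smul_left, inner_smul_right, inner_sub_left, inner_sub_right,
        inner_add_left, inner_add_right, map_inv₀, map_ofNat, Complex.conj_I]
      ring
    rw [hnorm, hs, hsc, hd]
    have hI2 : (Complex.I : ℂ) ^ 2 = -1 := Complex.I_sq
    linear_combination (-(k:ℂ) * ((inner ℂ (κ v) (κ v) : ℂ) - inner ℂ v (K v))) * hI2
  -- Step 7: real energy identity
  have h7 : ∀ (k : ℤ) (v : E), k ≠ 0 → V v = (Complex.I * (k:ℂ)) • v →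
      2 * (‖ηp v‖^2 - ‖ηm v‖^2)
        = (k:ℝ) * ((inner ℂ (κ v) (κ v) : ℂ).re - (inner ℂ v (K v) : ℂ).re) := by
    intro k v hk hv
    have h := congrArg Complex.re (h6 k v hk hv)
    have e1 : (inner ℂ (ηp v) (ηp v) : ℂ).re = ‖ηp v‖^2 := by
      have := @inner_self_eq_norm_sq ℂ E _ _ _ (ηp v); simpa using this
    have e2 : (inner ℂ (ηm v) (ηm v) : ℂ).re = ‖ηm v‖^2 := by
      have := @inner_self_eq_norm_sq ℂ E _ _ _ (ηm v); simpa using this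
    have i1 : (inner ℂ (ηp v) (ηp v) : ℂ).im = 0 := inner_self_im (𝕜 := ℂ) (ηp v)
    have i2 : (inner ℂ (ηm v) (ηm v) : ℂ).im = 0 := inner_self_im (𝕜 := ℂ) (ηm v)
    simp only [Complex.mul_re, Complex.mul_im, Complex.sub_re, Complex.sub_im, i1, i2, e1, e2] at h
    simpa [Complex.mul_re, Complex.sub_re, Complex.sub_im, i1, i2, e1, e2] using h
  -- nonnegativity of ⟪κv, κv⟫
  have hκnn : ∀ v : E, 0 ≤ (inner ℂ (κ v) (κ v) : ℂ).re := by
    intro v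
    have e : (inner ℂ (κ v) (κ v) : ℂ).re = ‖κ v‖^2 := by
      have := @inner_self_eq_norm_sq ℂ E _ _ _ (κ v); simpa using this
    rw [e]; positivity
  -- η⁺ is injective on modes k ≥ 1
  have keyp : ∀ (k : ℤ) (v : E), 1 ≤ k → V v = (Complex.I * (k:ℂ)) • v →
      ηp v = 0 → v = 0 := by
    intro k v hk hv h0
    have h := h7 k v (by omega) hv
    rw [h0, norm_zero] at h
    have hκ := hκnn v
    have hK := hKub v
    have hk' : (1:ℝ) ≤ (k:ℝ) := by exact_mod_cast hk
    have hXnn : 0 ≤ (inner ℂ (κ v) (κ v) : ℂ).re - (inner ℂ v (K v) : ℂ).re := by nlinarith [sq_nonneg ‖v‖]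
    have hstep : (1:ℝ) * ((inner ℂ (κ v) (κ v) : ℂ).re - (inner ℂ v (K v) : ℂ).re)
        ≤ (k:ℝ) * ((inner ℂ (κ v) (κ v) : ℂ).re - (inner ℂ v (K v) : ℂ).re) :=
      mul_le_mul_of_nonneg_right hk' hXnn
    have hv2 : 2 * a * ‖v‖^2 ≤ 0 := by
      linarith [h, hκ, hK, hstep, sq_nonneg ‖ηm v‖]
    have hsq : ‖v‖^2 ≤ 0 := by nlinarith
    have hn0 : ‖v‖^2 = 0 := le_antisymm hsq (sq_nonneg _)
    have : ‖v‖ = 0 := by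
      have := sq_eq_zero_iff.mp hn0
      simpa using this
    exact norm_eq_zero.mp this
  -- η⁻ is injective on modes k ≤ -1
  have keym : ∀ (k : ℤ) (v : E), k ≤ -1 → V v = (Complex.I * (k:ℂ)) • v →
      ηm v = 0 → v = 0 := by
    intro k v hk hv h0
    have h := h7 k v (by omega) hv
    rw [h0, norm_zero] at h
    have hκ := hκnn v
    have hK := hKub v
    have hk' : (k:ℝ) ≤ -1 := by exact_mod_cast hk
    have hXnn : 0 ≤ (inner ℂ (κ v) (κ v) : ℂ).re - (inner ℂ v (K v) : ℂ).re := by nlinarith [sq_nonneg ‖v‖]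
    have hstep : (k:ℝ) * ((inner ℂ (κ v) (κ v) : ℂ).re - (inner ℂ v (K v) : ℂ).re)
        ≤ (-1:ℝ) * ((inner ℂ (κ v) (κ v) : ℂ).re - (inner ℂ v (K v) : ℂ).re) :=
      mul_le_mul_of_nonneg_right hk' hXnn
    have hv2 : 2 * a * ‖v‖^2 ≤ 0 := by
      linarith [h, hκ, hK, hstep, sq_nonneg ‖ηp v‖]
    have hsq : ‖v‖^2 ≤ 0 := by nlinarith
    have hn0 : ‖v‖^2 = 0 := le_antisymm hsq (sq_nonneg _)
    have : ‖v‖ = 0 := by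
      have := sq_eq_zero_iff.mp hn0
      simpa using this
    exact norm_eq_zero.mp this
  -- bounds on the support
  obtain ⟨M, hM⟩ := hufin.bddAbove
  obtain ⟨m, hm⟩ := hufin.bddBelow
  have hMtop : ∀ j : ℤ, M < j → u j = 0 := by
    intro j hj
    by_contra hne
    exact absurd (hM hne) (not_le.mpr hj)
  have hmbot : ∀ j : ℤ, j < m → u j = 0 := by
    intro j hj
    by_contra hne
    exact absurd (hm hne) (not_le.mpr hj)
  -- downward induction from the top
  have hpos : ∀ d : ℕ, ∀ j : ℤ, n ≤ j → M + 1 ≤ j + d → u j = 0 := by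
    intro d
    induction d with
    | zero => intro j hj hd; exact hMtop j (by omega)
    | succ d ih =>
      intro j hj hd
      by_cases hj' : M < j
      · exact hMtop j hj'
      · have hu1 : u (j+1) = 0 := ih (j+1) (by omega) (by omega)
        have hu2 : u (j+2) = 0 := ih (j+2) (by omega) (by omega)
        have hw0 : w (j+1) = 0 := hwvanish (j+1) (by rw [abs_of_pos (by omega : (0:ℤ) < j+1)]; omega)
        have h := hw (j+1)
        have e1 : j + 1 - 1 = j := by ring
        have e2 : j + 1 + 1 = j + 2 := by ring
        rw [hw0, e1, e2, hu1, hu2] at h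
        have he : ηp (u j) = 0 := by simpa using h.symm
        exact keyp j (u j) (by omega) (hu j) he
  -- upward induction from the bottom
  have hneg : ∀ d : ℕ, ∀ j : ℤ, j ≤ -n → j - d ≤ m - 1 → u j = 0 := by
    intro d
    induction d with
    | zero => intro j hj hd; exact hmbot j (by omega)
    | succ d ih =>
      intro j hj hd
      by_cases hj' : j < m
      · exact hmbot j hj'
      · have hu1 : u (j-1) = 0 := ih (j-1) (by omega) (by omega)
        have hu2 : u (j-2) = 0 := ih (j-2) (by omega) (by omega)
        have hw0 : w (j-1) = 0 := hwvanish (j-1) (by rw [abs_of_neg (by omega : j-1 < 0)]; omega)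
        have h := hw (j-1)
        have e1 : j - 1 - 1 = j - 2 := by ring
        have e2 : j - 1 + 1 = j := by ring
        rw [hw0, e1, e2, hu1, hu2] at h
        have he : ηm (u j) = 0 := by simpa using h.symm
        exact keym j (u j) (by omega) (hu j) he
  intro k hk
  rcases le_or_gt 0 k with h0 | h0
  · have hnk : n ≤ k := by rwa [abs_of_nonneg h0] at hk
    exact hpos (M + 1 - k).toNat k hnk (by have := Int.self_le_toNat (M + 1 - k); omega)
  · have hnk : k ≤ -n := by rw [abs_of_neg h0] at hk; omega
    exact hneg (k - m + 1).toNat k hnk (by have := Int.self_le_toNat (k - m + 1); omega)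
end

section
/- (Riccati energy identity, first part of Theorem 2.4.) Suppose r, u, K ∈ S satisfy the magnetic Riccati equation Dr + r² + K = 0 (pointwise on Ω). Then ∫_Ω (Du − r·u)² dμ = ∫_Ω (Du)² dμ − ∫_Ω K·u² dμ. -/
open MeasureTheory

/-- Riccati energy identity (first part of Theorem 2.4): if `Dr + r² + K = 0`
pointwise, then `∫ (Du − ru)² dμ = ∫ (Du)² dμ − ∫ K u² dμ`.  Here `S` is a set of
bounded measurable real functions on a finite measure space, containing the
constants and closed under the algebra operations, and `D` is an ℝ-linear
derivation on `S` whose image has vanishing integral (abstracting the generator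
of a magnetic flow with the invariant Liouville measure). -/
theorem riccati_energy_identity
    {Ω : Type*} [MeasurableSpace Ω] (μ : Measure Ω) [IsFiniteMeasure μ]
    (S : Set (Ω → ℝ))
    (hmeas : ∀ f ∈ S, Measurable f)
    (hbdd : ∀ f ∈ S, ∃ C : ℝ, ∀ x, |f x| ≤ C)
    (hconst : ∀ c : ℝ, (fun _ => c) ∈ S)
    (hadd : ∀ f ∈ S, ∀ g ∈ S, f + g ∈ S)
    (hsmul : ∀ c : ℝ, ∀ f ∈ S, c • f ∈ S)
    (hmul : ∀ f ∈ S, ∀ g ∈ S, f * g ∈ S)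
    (D : (Ω → ℝ) → (Ω → ℝ))
    (hD : ∀ f ∈ S, D f ∈ S)
    (hDadd : ∀ f ∈ S, ∀ g ∈ S, D (f + g) = D f + D g)
    (hDsmul : ∀ c : ℝ, ∀ f ∈ S, D (c • f) = c • D f)
    (hleibniz : ∀ f ∈ S, ∀ g ∈ S, D (f * g) = D f * g + f * D g)
    (hint : ∀ f ∈ S, ∫ x, D f x ∂μ = 0)
    (r u K : Ω → ℝ) (hr : r ∈ S) (hu : u ∈ S) (hK : K ∈ S)
    (hriccati : ∀ x, D r x + r x ^ 2 + K x = 0) :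
    ∫ x, (D u x - r x * u x) ^ 2 ∂μ
      = (∫ x, (D u x) ^ 2 ∂μ) - ∫ x, K x * u x ^ 2 ∂μ := by
  have hInt : ∀ f ∈ S, Integrable f μ := by
    intro f hf
    obtain ⟨C, hC⟩ := hbdd f hf
    exact ⟨(hmeas f hf).aestronglyMeasurable,
      HasFiniteIntegral.of_bounded (C := C) (ae_of_all μ hC)⟩
  set g : Ω → ℝ := r * (u * u) with hg
  have hgS : g ∈ S := hmul r hr _ (hmul u hu u hu)
  have hDgS : D g ∈ S := hD g hgS
  have hDuS : D u ∈ S := hD u hu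
  have hDg : ∀ x, D g x = D r x * (u x * u x)
      + r x * (D u x * u x + u x * D u x) := by
    intro x
    have h1 := congrFun (hleibniz r hr _ (hmul u hu u hu)) x
    have h2 := congrFun (hleibniz u hu u hu) x
    simp only [Pi.mul_apply, Pi.add_apply] at h1 h2
    rw [hg, h1, h2]
  have key : ∀ x, (D u x - r x * u x) ^ 2
      = (D u x) ^ 2 - K x * u x ^ 2 - D g x := by
    intro x
    have hric := hriccati x
    rw [hDg x]
    nlinarith [hric]
  calc ∫ x, (D u x - r x * u x) ^ 2 ∂μ
      = ∫ x, ((D u x) ^ 2 - K x * u x ^ 2 - D g x) ∂μ := by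
        exact integral_congr_ae (ae_of_all μ key)
    _ = (∫ x, (D u x) ^ 2 ∂μ) - ∫ x, K x * u x ^ 2 ∂μ := by
        have hI1 : Integrable (fun x => (D u x) ^ 2) μ := by
          have := hInt _ (hmul _ hDuS _ hDuS)
          simpa [pow_two, Pi.mul_def] using this
        have hI2 : Integrable (fun x => K x * u x ^ 2) μ := by
          have := hInt _ (hmul K hK _ (hmul u hu u hu))
          simpa [pow_two, mul_assoc, Pi.mul_def] using this
        have hI3 : Integrable (D g) μ := hInt _ hDgS
        have e1 : ∫ x, (D u x ^ 2 - K x * u x ^ 2 - D g x) ∂μ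
            = (∫ x, (D u x ^ 2 - K x * u x ^ 2) ∂μ) - ∫ x, D g x ∂μ :=
          integral_sub (hI1.sub hI2) hI3
        have e2 : ∫ x, (D u x ^ 2 - K x * u x ^ 2) ∂μ
            = (∫ x, D u x ^ 2 ∂μ) - ∫ x, K x * u x ^ 2 ∂μ :=
          integral_sub hI1 hI2
        rw [e1, e2, hint g hgS, sub_zero]
end

section
/- (Positivity and vanishing, second part of Theorem 2.4.) Suppose K ∈ S and there exist r⁺, r⁻ ∈ S with Dr⁺ + (r⁺)² + K = 0 and Dr⁻ + (r⁻)² + K = 0, such that r⁺(x) ≠ r⁻(x) for every x ∈ Ω. Then for every u ∈ S one has ∫_Ω (Du)² dμ − ∫_Ω K·u² dμ ≥ 0, and this quantity equals 0 if and only if u = 0 μ-almost everywhere. -/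
open MeasureTheory

/-- Positivity and vanishing (second part of Theorem 2.4): if the Riccati
equation `Dr + r² + K = 0` admits two solutions `r⁺, r⁻ ∈ S` with
`r⁺(x) ≠ r⁻(x)` for every `x`, then for every `u ∈ S` one has
`∫ (Du)² dμ − ∫ K u² dμ ≥ 0`, with equality iff `u = 0` μ-a.e. -/
theorem riccati_positivity
    {Ω : Type*} [MeasurableSpace Ω] (μ : Measure Ω) [IsFiniteMeasure μ]
    (S : Set (Ω → ℝ))
    (hmeas : ∀ f ∈ S, Measurable f)
    (hbdd : ∀ f ∈ S, ∃ C : ℝ, ∀ x, |f x| ≤ C)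
    (hconst : ∀ c : ℝ, (fun _ => c) ∈ S)
    (hadd : ∀ f ∈ S, ∀ g ∈ S, f + g ∈ S)
    (hsmul : ∀ c : ℝ, ∀ f ∈ S, c • f ∈ S)
    (hmul : ∀ f ∈ S, ∀ g ∈ S, f * g ∈ S)
    (D : (Ω → ℝ) → (Ω → ℝ))
    (hD : ∀ f ∈ S, D f ∈ S)
    (hDadd : ∀ f ∈ S, ∀ g ∈ S, D (f + g) = D f + D g)
    (hDsmul : ∀ c : ℝ, ∀ f ∈ S, D (c • f) = c • D f)
    (hleibniz : ∀ f ∈ S, ∀ g ∈ S, D (f * g) = D f * g + f * D g)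
    (hint : ∀ f ∈ S, ∫ x, D f x ∂μ = 0)
    (K rp rm : Ω → ℝ) (hK : K ∈ S) (hrp : rp ∈ S) (hrm : rm ∈ S)
    (hriccatip : ∀ x, D rp x + rp x ^ 2 + K x = 0)
    (hriccatim : ∀ x, D rm x + rm x ^ 2 + K x = 0)
    (hne : ∀ x, rp x ≠ rm x) :
    ∀ u ∈ S,
      0 ≤ (∫ x, (D u x) ^ 2 ∂μ) - ∫ x, K x * u x ^ 2 ∂μ ∧
      ((∫ x, (D u x) ^ 2 ∂μ) - ∫ x, K x * u x ^ 2 ∂μ = 0 ↔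
        ∀ᵐ x ∂μ, u x = 0) := by
  -- every element of S is integrable
  have Iint : ∀ f ∈ S, Integrable f μ := by
    intro f hf
    obtain ⟨C, hC⟩ := hbdd f hf
    exact ⟨(hmeas f hf).aestronglyMeasurable,
      HasFiniteIntegral.of_bounded (C := C)
        (Filter.Eventually.of_forall fun x => by simpa [Real.norm_eq_abs] using hC x)⟩
  intro u hu
  have hDu : D u ∈ S := hD u hu
  have hu2 : u * u ∈ S := hmul u hu u hu
  have hDu2 : D (u * u) ∈ S := hD _ hu2
  -- integrability of (Du)^2 and K u^2
  have IDu2 : Integrable (fun x => (D u x) ^ 2) μ := by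
    have := Iint _ (hmul _ hDu _ hDu)
    exact this.congr (Filter.Eventually.of_forall fun x => by simp [Pi.mul_apply, sq])
  have IKu2 : Integrable (fun x => K x * u x ^ 2) μ := by
    have := Iint _ (hmul K hK _ hu2)
    refine this.congr ?_
    exact Filter.Eventually.of_forall fun x => by simp [sq, mul_assoc]
  -- key identity for each Riccati solution
  have key : ∀ r ∈ S, (∀ x, D r x + r x ^ 2 + K x = 0) →
      ∫ x, (D u x - r x * u x) ^ 2 ∂μ =
        (∫ x, (D u x) ^ 2 ∂μ) - ∫ x, K x * u x ^ 2 ∂μ := by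
    intro r hr hric
    set w := r * (u * u) with hw_def
    have hw : w ∈ S := hmul r hr _ hu2
    have hDw : D w = D r * (u * u) + r * (D u * u + u * D u) := by
      rw [hw_def, hleibniz r hr _ hu2, hleibniz u hu u hu]
    have hpt : ∀ x, (D u x - r x * u x) ^ 2 =
        (D u x) ^ 2 - K x * u x ^ 2 - D w x := by
      intro x
      have h1 := hric x
      have h2 : D w x = D r x * (u x * u x) + r x * (D u x * u x + u x * D u x) := by
        rw [hDw]; simp [Pi.add_apply, Pi.mul_apply]
      rw [h2]; nlinarith [h1]
    have IDw : Integrable (D w) μ := Iint _ (hD w hw)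
    calc ∫ x, (D u x - r x * u x) ^ 2 ∂μ
        = ∫ x, ((D u x) ^ 2 - K x * u x ^ 2 - D w x) ∂μ := by
          exact integral_congr_ae (Filter.Eventually.of_forall fun x => hpt x)
      _ = (∫ x, ((D u x) ^ 2 - K x * u x ^ 2) ∂μ) - ∫ x, D w x ∂μ :=
          integral_sub (IDu2.sub IKu2) IDw
      _ = (∫ x, (D u x) ^ 2 ∂μ) - ∫ x, K x * u x ^ 2 ∂μ := by
          rw [hint w hw, integral_sub IDu2 IKu2]; ring
  have keyp := key rp hrp hriccatip
  have keym := key rm hrm hriccatim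
  -- integrability of the square differences
  have hvmem : ∀ r ∈ S, Integrable (fun x => (D u x - r x * u x) ^ 2) μ := by
    intro r hr
    have hv : D u + (-1 : ℝ) • (r * u) ∈ S :=
      hadd _ hDu _ (hsmul (-1) _ (hmul r hr u hu))
    have := Iint _ (hmul _ hv _ hv)
    refine this.congr (Filter.Eventually.of_forall fun x => ?_)
    simp [Pi.add_apply, Pi.smul_apply, Pi.mul_apply, sq]; ring
  constructor
  · rw [← keyp]
    exact integral_nonneg fun x => sq_nonneg _
  · constructor
    · intro h
      -- both square integrals vanish
      have hpz : ∀ᵐ x ∂μ, (D u x - rp x * u x) ^ 2 = 0 := by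
        have := (integral_eq_zero_iff_of_nonneg (fun x => sq_nonneg _)
          (hvmem rp hrp)).mp (by rw [keyp, h])
        filter_upwards [this] with x hx using hx
      have hmz : ∀ᵐ x ∂μ, (D u x - rm x * u x) ^ 2 = 0 := by
        have := (integral_eq_zero_iff_of_nonneg (fun x => sq_nonneg _)
          (hvmem rm hrm)).mp (by rw [keym, h])
        filter_upwards [this] with x hx using hx
      filter_upwards [hpz, hmz] with x h1 h2
      have e1 : D u x = rp x * u x := by nlinarith [sq_nonneg (D u x - rp x * u x)]
      have e2 : D u x = rm x * u x := by nlinarith [sq_nonneg (D u x - rm x * u x)]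
      have : (rp x - rm x) * u x = 0 := by rw [sub_mul, ← e1, ← e2, sub_self]
      rcases mul_eq_zero.mp this with h | h
      · exact absurd (sub_eq_zero.mp h) (hne x)
      · exact h
    · intro h
      -- converse: u = 0 a.e. implies the quantity vanishes
      have hq : u * D u ∈ S := hmul u hu _ hDu
      have hDq : D (u * D u) = D u * D u + u * D (D u) := hleibniz u hu _ hDu
      have h1 : ∫ x, D (u * D u) x ∂μ = 0 := hint _ hq
      have h2 : (fun x => D (u * D u) x) =ᵐ[μ] fun x => (D u x) ^ 2 := by
        filter_upwards [h] with x hx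
        rw [hDq]; simp [Pi.add_apply, Pi.mul_apply, hx, sq]
      have h3 : ∫ x, (D u x) ^ 2 ∂μ = 0 := by
        rw [← integral_congr_ae h2, h1]
      have h4 : ∫ x, K x * u x ^ 2 ∂μ = 0 := by
        refine integral_eq_zero_of_ae ?_
        filter_upwards [h] with x hx
        simp [hx]
      rw [h3, h4, sub_zero]
end

section
/- (Abstract injectivity of the Jacobi operator, Lemma on (F+A)u = 0.) Suppose K ∈ S and there exist r⁺, r⁻ ∈ S with Dr⁺ + (r⁺)² + K = 0 and Dr⁻ + (r⁻)² + K = 0, such that r⁺(x) ≠ r⁻(x) for every x ∈ Ω. If u, w ∈ S satisfy Du = w and Dw = −K·u (pointwise on Ω), then u = 0 μ-almost everywhere and w = 0 μ-almost everywhere. -/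
open MeasureTheory

/-- Abstract injectivity of the Jacobi operator: if the Riccati equation
`Dr + r² + K = 0` admits two solutions `r⁺, r⁻ ∈ S` with `r⁺(x) ≠ r⁻(x)` for
every `x`, and `u, w ∈ S` satisfy the homogeneous Jacobi system `Du = w`,
`Dw = −K·u` pointwise, then `u = 0` and `w = 0` μ-almost everywhere. -/
theorem jacobi_operator_injective
    {Ω : Type*} [MeasurableSpace Ω] (μ : Measure Ω) [IsFiniteMeasure μ]
    (S : Set (Ω → ℝ))
    (hmeas : ∀ f ∈ S, Measurable f)
    (hbdd : ∀ f ∈ S, ∃ C : ℝ, ∀ x, |f x| ≤ C)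
    (hconst : ∀ c : ℝ, (fun _ => c) ∈ S)
    (hadd : ∀ f ∈ S, ∀ g ∈ S, f + g ∈ S)
    (hsmul : ∀ c : ℝ, ∀ f ∈ S, c • f ∈ S)
    (hmul : ∀ f ∈ S, ∀ g ∈ S, f * g ∈ S)
    (D : (Ω → ℝ) → (Ω → ℝ))
    (hD : ∀ f ∈ S, D f ∈ S)
    (hDadd : ∀ f ∈ S, ∀ g ∈ S, D (f + g) = D f + D g)
    (hDsmul : ∀ c : ℝ, ∀ f ∈ S, D (c • f) = c • D f)
    (hleibniz : ∀ f ∈ S, ∀ g ∈ S, D (f * g) = D f * g + f * D g)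
    (hint : ∀ f ∈ S, ∫ x, D f x ∂μ = 0)
    (K rp rm : Ω → ℝ) (hK : K ∈ S) (hrp : rp ∈ S) (hrm : rm ∈ S)
    (hriccatip : ∀ x, D rp x + rp x ^ 2 + K x = 0)
    (hriccatim : ∀ x, D rm x + rm x ^ 2 + K x = 0)
    (hne : ∀ x, rp x ≠ rm x)
    (u w : Ω → ℝ) (hu : u ∈ S) (hw : w ∈ S)
    (hJacobi1 : ∀ x, D u x = w x)
    (hJacobi2 : ∀ x, D w x = -(K x * u x)) :
    (∀ᵐ x ∂μ, u x = 0) ∧ (∀ᵐ x ∂μ, w x = 0) := by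
  -- For each Riccati solution r, show w = r·u a.e.
  have key : ∀ r ∈ S, (∀ x, D r x + r x ^ 2 + K x = 0) →
      ∀ᵐ x ∂μ, w x = r x * u x := by
    intro r hr hric
    set g : Ω → ℝ := u * w + (-1 : ℝ) • (r * (u * u)) with hg
    have hg1 : u * w ∈ S := hmul u hu w hw
    have hg2 : r * (u * u) ∈ S := hmul r hr _ (hmul u hu u hu)
    have hgS : g ∈ S := hadd _ hg1 _ (hsmul (-1) _ hg2)
    -- the pointwise identity D g x = (w x - r x * u x)^2
    have hDg : ∀ x, D g x = (w x - r x * u x) ^ 2 := by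
      intro x
      have h1 : D g = D (u * w) + (-1 : ℝ) • D (r * (u * u)) := by
        rw [hg, hDadd _ hg1 _ (hsmul (-1) _ hg2), hDsmul (-1) _ hg2]
      have h2 := hleibniz u hu w hw
      have h3 := hleibniz r hr _ (hmul u hu u hu)
      have h4 := hleibniz u hu u hu
      have hDgx : D g x = D u x * w x + u x * D w x
          + (-1) * (D r x * (u x * u x) + r x * (D u x * u x + u x * D u x)) := by
        rw [h1]
        simp only [Pi.add_apply, Pi.smul_apply, smul_eq_mul, h2, h3, h4, Pi.mul_apply]
      rw [hDgx, hJacobi1, hJacobi2]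
      have hr' : D r x = -(r x ^ 2) - K x := by linarith [hric x]
      rw [hr']
      ring
    -- D g integrates to 0, is nonneg, measurable, bounded ⇒ 0 a.e.
    have hintg : ∫ x, D g x ∂μ = 0 := hint g hgS
    have hDgS : D g ∈ S := hD g hgS
    have hm : Measurable (D g) := hmeas _ hDgS
    obtain ⟨C, hC⟩ := hbdd _ hDgS
    have hInt : Integrable (D g) μ := by
      refine ⟨hm.aestronglyMeasurable, ?_⟩
      exact HasFiniteIntegral.of_bounded (C := C) (Filter.Eventually.of_forall fun x => by
        simpa [Real.norm_eq_abs] using hC x)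
    have hnn : 0 ≤ᵐ[μ] D g := Filter.Eventually.of_forall fun x => by
      rw [hDg x]; positivity
    have hae : D g =ᵐ[μ] 0 := (integral_eq_zero_iff_of_nonneg_ae hnn hInt).mp hintg
    filter_upwards [hae] with x hx
    have : (w x - r x * u x) ^ 2 = 0 := by rw [← hDg x]; simpa using hx
    have := pow_eq_zero_iff (n := 2) (by norm_num) |>.mp this
    linarith
  have hp := key rp hrp hriccatip
  have hm' := key rm hrm hriccatim
  have hu0 : ∀ᵐ x ∂μ, u x = 0 := by
    filter_upwards [hp, hm'] with x h1 h2
    have : (rp x - rm x) * u x = 0 := by linarith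
    rcases mul_eq_zero.mp this with h | h
    · exact absurd (by linarith : rp x = rm x) (hne x)
    · exact h
  refine ⟨hu0, ?_⟩
  filter_upwards [hp, hu0] with x h1 h2
  rw [h1, h2, mul_zero]
end
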